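/- arXiv:2008.10983 — 8 statements merged into one kernel-verified Lean document; each statement's English description precedes it below -/
import Mathlib

section
/- Let g(s) be a strictly proper real rational function with no poles on the imaginary axis and at least one pole with positive real part. Then the robust instability radius satisfies ρ*(g) ≥ 1/‖g‖_{L∞}; equivalently, every proper stable real rational δ(s) that internally stabilizes g under positive feedback satisfies ‖δ‖_{H∞} ≥ 1/ sup_{ω∈ℝ} |g(iω)|. -/
open Polynomial

/-- Evaluation of the real rational function `n/d` at a complex argument. -/
noncomputable def ratEval (n d : Polynomial ℝ) (s : ℂ) : ℂ :=
  (n.map (algebraMap ℝ ℂ)).eval s / (d.map (algebraMap ℝ ℂ)).eval s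

/-- All complex poles of `δ = b/a` (i.e. roots of `a`) have negative real part. -/
def StableRat (a : Polynomial ℝ) : Prop :=
  ∀ z : ℂ, (a.map (algebraMap ℝ ℂ)).eval z = 0 → z.re < 0

/-- `δ = b/a` is a proper stable real rational function that internally stabilizes
`g = n/d` under positive feedback: every root of `a d − b n` has negative real part. -/
def Stabilizes (b a n d : Polynomial ℝ) : Prop :=
  a ≠ 0 ∧ IsCoprime b a ∧ b.degree ≤ a.degree ∧ StableRat a ∧
    ∀ z : ℂ, ((a * d - b * n).map (algebraMap ℝ ℂ)).eval z = 0 → z.re < 0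

/-- `sup_{ω ∈ ℝ} |g(iω)|` for `g = n/d`. -/
noncomputable def hinfNorm (n d : Polynomial ℝ) : ℝ :=
  ⨆ ω : ℝ, ‖ratEval n d (ω * Complex.I)‖

/-- Number of poles (roots of `d`), with multiplicity, in the open right half plane. -/
noncomputable def orhpCount (d : Polynomial ℝ) : ℕ :=
  Multiset.card ((d.map (algebraMap ℝ ℂ)).roots.filter (fun z => 0 < z.re))

/-- Robust instability radius of `g = n/d`: infimum of `‖δ‖_{H∞}` over `δ ∈ S(g)`
(`+∞` if `S(g)` is empty). -/
noncomputable def RIR (n d : Polynomial ℝ) : ENNReal :=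
  sInf { r : ENNReal | ∃ b a : Polynomial ℝ,
    Stabilizes b a n d ∧ r = ENNReal.ofReal (hinfNorm b a) }

/-- `μ(e)` : infimum of `‖δ‖_{H∞}` over `δ ∈ S(g)` with `δ(0) = e`. -/
noncomputable def Mu (n d : Polynomial ℝ) (e : ℝ) : ENNReal :=
  sInf { r : ENNReal | ∃ b a : Polynomial ℝ,
    Stabilizes b a n d ∧ b.eval 0 / a.eval 0 = e ∧ r = ENNReal.ofReal (hinfNorm b a) }

/-- The characteristic polynomial `chp` achieves `ω_c`-stability: simple root at `iω_c`
(and at `−iω_c` when `ω_c ≠ 0`), all other roots with negative real part. -/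
def OmegaStable (chp : Polynomial ℝ) (ωc : ℝ) : Prop :=
  Polynomial.rootMultiplicity ((ωc : ℂ) * Complex.I) (chp.map (algebraMap ℝ ℂ)) = 1 ∧
  (ωc ≠ 0 → Polynomial.rootMultiplicity (-((ωc : ℂ) * Complex.I)) (chp.map (algebraMap ℝ ℂ)) = 1) ∧
  ∀ z : ℂ, (chp.map (algebraMap ℝ ℂ)).eval z = 0 →
    z ≠ (ωc : ℂ) * Complex.I → z ≠ -((ωc : ℂ) * Complex.I) → z.re < 0

/-!
Suppose `‖δ‖_{H∞} ‖g‖_{L∞} ≤ 1` and put `ψ = b n / (a d - b n)`. On the imaginary axis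
`|b n| ≤ |a d|`, i.e. `|ψ| ≤ |1 + ψ|`, i.e. `Re ψ ≥ -1/2`. Internal stability makes `ψ`
holomorphic on the closed right half-plane, and strict properness makes it vanish at infinity,
so by Phragmén–Lindelöf applied to `exp (-ψ)` the bound `Re ψ ≥ -1/2` persists on the whole
right half-plane. But at an unstable pole `z₀` of `g` we have `d(z₀) = 0`, hence `ψ(z₀) = -1`.
So in fact `‖δ‖_{H∞} ‖g‖_{L∞} > 1`.
-/

open Complex Filter Asymptotics Bornology Topology

theorem Continuous.bddAbove_range_of_isBoundedUnder_cocompact {X α : Type*} [TopologicalSpace X]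
    [LinearOrder α] [TopologicalSpace α] [ClosedIciTopology α] {f : X → α} (hf : Continuous f)
    (hbdd : IsBoundedUnder (· ≤ ·) (cocompact X) f) :
    BddAbove (Set.range f) := by
  obtain ⟨c, hc⟩ := hbdd
  have : Nonempty α := ⟨c⟩
  obtain ⟨K, hK, hKc⟩ := mem_cocompact.mp hc
  obtain ⟨M, hM⟩ := hK.bddAbove_image hf.continuousOn
  refine ⟨max M c, ?_⟩
  rintro _ ⟨x, rfl⟩
  by_cases hx : x ∈ K
  · exact (hM ⟨x, hx, rfl⟩).trans (le_max_left _ _)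
  · exact (hKc hx : f x ≤ c).trans (le_max_right _ _)

theorem tendsto_ofReal_mul_I_cocompact :
    Tendsto (fun ω : ℝ => (ω : ℂ) * I) (cocompact ℝ) (cobounded ℂ) := by
  rw [← tendsto_norm_atTop_iff_cobounded]
  exact (tendsto_norm_cocompact_atTop (E := ℝ)).congr fun ω => by simp

theorem ratEval_mul_eval_map {p q : ℝ[X]} {z : ℂ} (hq : (q.map (algebraMap ℝ ℂ)).eval z ≠ 0) :
    ratEval p q z * (q.map (algebraMap ℝ ℂ)).eval z = (p.map (algebraMap ℝ ℂ)).eval z :=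
  div_mul_cancel₀ _ hq

theorem bddAbove_norm_ratEval_ofReal_mul_I {p q : ℝ[X]} (hdeg : p.degree ≤ q.degree)
    (hq : ∀ ω : ℝ, (q.map (algebraMap ℝ ℂ)).eval ((ω : ℂ) * I) ≠ 0) :
    BddAbove (Set.range fun ω : ℝ => ‖ratEval p q ((ω : ℂ) * I)‖) := by
  have hcont : Continuous fun ω : ℝ => ratEval p q ((ω : ℂ) * I) :=
    Continuous.div (by fun_prop) (by fun_prop) hq
  refine hcont.norm.bddAbove_range_of_isBoundedUnder_cocompact ?_
  have hO := isBigO_cobounded_of_degree_le (R := ℂ) (P := p.map (algebraMap ℝ ℂ))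
    (Q := q.map (algebraMap ℝ ℂ)) (by simpa only [degree_map] using hdeg)
  exact tendsto_ofReal_mul_I_cocompact.isBoundedUnder_comp (div_isBoundedUnder_of_isBigO hO)

theorem norm_ratEval_le_hinfNorm {p q : ℝ[X]} (hdeg : p.degree ≤ q.degree)
    (hq : ∀ ω : ℝ, (q.map (algebraMap ℝ ℂ)).eval ((ω : ℂ) * I) ≠ 0) (ω : ℝ) :
    ‖ratEval p q ((ω : ℂ) * I)‖ ≤ hinfNorm p q :=
  le_ciSup (bddAbove_norm_ratEval_ofReal_mul_I hdeg hq) ω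

theorem hinfNorm_nonneg (p q : ℝ[X]) : 0 ≤ hinfNorm p q :=
  Real.iSup_nonneg fun _ => norm_nonneg _

theorem StableRat.eval_ofReal_mul_I_ne_zero {a : ℝ[X]} (ha : StableRat a) (ω : ℝ) :
    (a.map (algebraMap ℝ ℂ)).eval ((ω : ℂ) * I) ≠ 0 := fun h => by
  simpa using ha _ h

theorem degree_mul_lt_degree_mul {a b n d : ℝ[X]} (ha : a ≠ 0)
    (hba : b.degree ≤ a.degree) (hnd : n.degree < d.degree) :
    (b * n).degree < (a * d).degree := by
  rcases eq_or_ne b 0 with rfl | hb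
  · simpa [bot_lt_iff_ne_bot] using mul_ne_zero ha (ne_zero_of_degree_gt hnd)
  · rw [degree_mul, degree_mul]
    exact WithBot.add_lt_add_of_le_of_lt (degree_ne_bot.mpr hb) hba hnd

theorem neg_half_le_re_of_norm_le_norm_one_add {w : ℂ} (h : ‖w‖ ≤ ‖1 + w‖) :
    -(1 / 2) ≤ w.re := by
  have h2 : normSq w ≤ normSq (1 + w) := by
    rw [← Complex.sq_norm, ← Complex.sq_norm]
    gcongr
  rw [normSq_add, normSq_one] at h2
  simp only [one_mul, conj_re] at h2
  linarith

theorem le_re_of_forall_le_re_ofReal_mul_I {ψ : ℂ → ℂ} {c : ℝ}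
    (hd : DiffContOnCl ℂ ψ {z | 0 < z.re}) (hlim : Tendsto ψ (cobounded ℂ) (𝓝 0))
    (him : ∀ ω : ℝ, c ≤ (ψ (ω * I)).re) {z : ℂ} (hz : 0 ≤ z.re) : c ≤ (ψ z).re := by
  set f := fun z => exp (-ψ z)
  have hf : Tendsto f (cobounded ℂ) (𝓝 1) := by simpa using hlim.neg.cexp
  have hfd : DiffContOnCl ℂ f {z | 0 < z.re} := differentiable_exp.comp_diffContOnCl hd.neg
  have hexp : ∃ c < (2 : ℝ), ∃ B,
      f =O[cobounded ℂ ⊓ 𝓟 {z | 0 < z.re}] fun z => Real.exp (B * ‖z‖ ^ c) :=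
    ⟨0, two_pos, 0, by simpa using (hf.isBigO_one ℝ).mono inf_le_left⟩
  have hre : IsBoundedUnder (· ≤ ·) atTop fun x : ℝ => ‖f x‖ :=
    (hf.comp (RCLike.tendsto_ofReal_atTop_cobounded ℂ)).norm.isBoundedUnder_le
  have key : ‖f z‖ ≤ Real.exp (-c) :=
    PhragmenLindelof.right_half_plane_of_bounded_on_real hfd hexp hre
      (fun ω => by simpa [f, norm_exp] using him ω) hz
  simpa [f, norm_exp] using key

theorem norm_eval_map_mul_le_of_hinfNorm_mul_le_one {b a n d : ℝ[X]}
    (hba : b.degree ≤ a.degree) (hnd : n.degree ≤ d.degree)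
    (ha : ∀ ω : ℝ, (a.map (algebraMap ℝ ℂ)).eval ((ω : ℂ) * I) ≠ 0)
    (hd : ∀ ω : ℝ, (d.map (algebraMap ℝ ℂ)).eval ((ω : ℂ) * I) ≠ 0)
    (hle : hinfNorm b a * hinfNorm n d ≤ 1) (ω : ℝ) :
    ‖((b * n).map (algebraMap ℝ ℂ)).eval ((ω : ℂ) * I)‖ ≤
      ‖((a * d).map (algebraMap ℝ ℂ)).eval ((ω : ℂ) * I)‖ := by
  have hδ := norm_ratEval_le_hinfNorm hba ha ω
  have hg := norm_ratEval_le_hinfNorm hnd hd ω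
  have hδg : ‖ratEval b a (ω * I)‖ * ‖ratEval n d (ω * I)‖ ≤ 1 :=
    (mul_le_mul hδ hg (norm_nonneg _) (hinfNorm_nonneg b a)).trans hle
  simp only [Polynomial.map_mul, eval_mul, norm_mul]
  rw [← ratEval_mul_eval_map (p := b) (ha ω), ← ratEval_mul_eval_map (p := n) (hd ω), norm_mul,
    norm_mul]
  calc _ = (‖ratEval b a (ω * I)‖ * ‖ratEval n d (ω * I)‖) *
        (‖(a.map (algebraMap ℝ ℂ)).eval (ω * I)‖ * ‖(d.map (algebraMap ℝ ℂ)).eval (ω * I)‖) := by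
        ring
    _ ≤ _ := mul_le_of_le_one_left (by positivity) hδg

theorem Stabilizes.one_lt_hinfNorm_mul_hinfNorm {b a n d : ℝ[X]}
    (hstab : Stabilizes b a n d) (hsp : n.degree < d.degree)
    (hnoimag : ∀ ω : ℝ, (d.map (algebraMap ℝ ℂ)).eval ((ω : ℂ) * I) ≠ 0)
    (hunst : ∃ z : ℂ, (d.map (algebraMap ℝ ℂ)).eval z = 0 ∧ 0 < z.re) :
    1 < hinfNorm b a * hinfNorm n d := by
  obtain ⟨ha, -, hba, hA, hS⟩ := hstab
  obtain ⟨z₀, hz₀, hz₀re⟩ := hunst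
  set P := (b * n).map (algebraMap ℝ ℂ)
  set Q := (a * d).map (algebraMap ℝ ℂ)
  set S := (a * d - b * n).map (algebraMap ℝ ℂ)
  have hSPQ : ∀ z, S.eval z = Q.eval z - P.eval z := fun z => by
    simp only [S, P, Q, Polynomial.map_sub, eval_sub]
  have hS_ne : ∀ z : ℂ, 0 ≤ z.re → S.eval z ≠ 0 := fun z hz h => (hS z h).not_ge hz
  by_contra! hle
  set ψ := fun z => P.eval z / S.eval z
  have hψ_diff : DiffContOnCl ℂ ψ {z | 0 < z.re} := by
    refine DifferentiableOn.diffContOnCl ?_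
    rw [closure_setOfPred_lt_re]
    exact P.differentiable.differentiableOn.div S.differentiable.differentiableOn hS_ne
  have hψ_lim : Tendsto ψ (cobounded ℂ) (𝓝 0) := by
    refine (isLittleO_cobounded_of_degree_lt ?_).tendsto_div_nhds_zero
    simp only [P, S, degree_map, degree_sub_eq_left_of_degree_lt
      (degree_mul_lt_degree_mul ha hba hsp)]
    exact degree_mul_lt_degree_mul ha hba hsp
  have hψ_axis : ∀ ω : ℝ, -(1 / 2) ≤ (ψ (ω * I)).re := fun ω => by
    have hSω := hS_ne (ω * I) (by simp)
    refine neg_half_le_re_of_norm_le_norm_one_add ?_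
    have h1ψ : 1 + ψ (ω * I) = Q.eval (ω * I) / S.eval (ω * I) := by
      rw [hSPQ] at hSω
      simp only [ψ, hSPQ]
      field_simp
      ring
    rw [h1ψ, norm_div, norm_div]
    gcongr
    exact norm_eval_map_mul_le_of_hinfNorm_mul_le_one hba hsp.le hA.eval_ofReal_mul_I_ne_zero
      hnoimag hle ω
  have hψ_z₀ : ψ z₀ = -1 := by
    have hS₀ := hS_ne z₀ hz₀re.le
    have hQ₀ : Q.eval z₀ = 0 := by simp [Q, eval_mul, hz₀]
    rw [hSPQ, hQ₀, zero_sub] at hS₀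
    simp only [ψ, hSPQ, hQ₀, zero_sub, div_neg, div_self (neg_ne_zero.mp hS₀)]
  have := le_re_of_forall_le_re_ofReal_mul_I hψ_diff hψ_lim hψ_axis hz₀re.le
  rw [hψ_z₀] at this
  norm_num at this

theorem stmt0_general (n d : Polynomial ℝ)
    (hsp : n.degree < d.degree)
    (hnoimag : ∀ ω : ℝ, (d.map (algebraMap ℝ ℂ)).eval ((ω : ℂ) * Complex.I) ≠ 0)
    (hunst : ∃ z : ℂ, (d.map (algebraMap ℝ ℂ)).eval z = 0 ∧ 0 < z.re)
    (b a : Polynomial ℝ) (hstab : Stabilizes b a n d) :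
    1 / hinfNorm n d ≤ hinfNorm b a := by
  have hgain := hstab.one_lt_hinfNorm_mul_hinfNorm hsp hnoimag hunst
  have hg : 0 < hinfNorm n d :=
    pos_of_mul_pos_right (one_pos.trans hgain) (hinfNorm_nonneg b a)
  rw [div_le_iff₀ hg]
  exact hgain.le

/-- for strictly proper `g = n/d` with no imaginary-axis poles and at
least one ORHP pole, every `δ ∈ S(g)` satisfies `‖δ‖_{H∞} ≥ 1/‖g‖_{L∞}`. -/
theorem stmt0 (n d : Polynomial ℝ) (hd : d ≠ 0) (hcop : IsCoprime n d)
    (hsp : n.degree < d.degree)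
    (hnoimag : ∀ ω : ℝ, (d.map (algebraMap ℝ ℂ)).eval ((ω : ℂ) * Complex.I) ≠ 0)
    (hunst : ∃ z : ℂ, (d.map (algebraMap ℝ ℂ)).eval z = 0 ∧ 0 < z.re)
    (b a : Polynomial ℝ) (hstab : Stabilizes b a n d) :
    1 / hinfNorm n d ≤ hinfNorm b a :=
  stmt0_general n d hsp hnoimag hunst b a hstab
end

section
/- (Root-locus perturbation, marginal mode at the origin.) Let p̂(s) and q(s) be real polynomials such that every root of p̂ has negative real part, q(0) ≠ 0, and deg q < 1 + deg p̂. Set p(s) := s · p̂(s). Then there exist a sign σ ∈ {+1, −1} and ε₀ > 0 such that for every real ε with 0 < σε < ε₀, every root of the polynomial p(s) − ε q(s) has negative real part. -/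
open Polynomial

open Filter Topology Asymptotics

/-!
Write `P`, `Q` for `p̂`, `q` over `ℂ`; a root of `s p̂(s) − ε q(s)` solves `z P(z) = ε Q(z)`.
Near the origin this reads `z = ε Q(z)/P(z)` with `Q/P ≈ c := q(0)/p̂(0) ≠ 0`, so `Re z` has
the sign of `ε c`, which is negative once the sign of `ε` is chosen opposite to that of `c`.
Away from the origin, on the closed right half-plane, `z P(z)` has no zeros and dominates `Q`
at infinity (`deg q ≤ deg (s p̂)`), so `‖Q‖ ≤ C ‖z P(z)‖` there, and no root survives
`|ε| < 1/C`.
-/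

theorem exists_sign_forall_mul_neg {c : ℝ} (hc : c ≠ 0) :
    ∃ σ : ℝ, (σ = 1 ∨ σ = -1) ∧ ∀ ε : ℝ, 0 < σ * ε → ε * c < 0 ∧ |ε| = σ * ε := by
  rcases hc.lt_or_gt with hneg | hpos
  · refine ⟨1, .inl rfl, fun ε hε => ?_⟩
    rw [one_mul] at *
    exact ⟨mul_neg_of_pos_of_neg hε hneg, abs_of_pos hε⟩
  · refine ⟨-1, .inr rfl, fun ε hε => ?_⟩
    have hε' : ε < 0 := by linarith
    exact ⟨mul_neg_of_neg_of_pos hε' hpos, by rw [abs_of_neg hε', neg_one_mul]⟩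

theorem eventually_re_neg_of_eq_ofReal_mul {f : ℂ → ℂ} (hf : ContinuousAt f 0)
    (hf0 : (f 0).re ≠ 0) :
    ∀ᶠ z in 𝓝 0, ∀ ε : ℝ, ε * (f 0).re < 0 → z = ε * f z → z.re < 0 := by
  have hsign : ∀ᶠ z in 𝓝 (0 : ℂ), 0 < (f 0).re * (f z).re :=
    continuousAt_const.eventually_lt
      (continuousAt_const.mul (Complex.continuous_re.continuousAt.comp hf)) (mul_self_pos.mpr hf0)
  filter_upwards [hsign] with z hz ε hε hzε
  have hre : z.re = ε * (f z).re := by rw [← Complex.re_ofReal_mul, ← hzε]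
  have : ε * (f z).re * (f 0).re ^ 2 < 0 := by nlinarith [mul_neg_of_neg_of_pos hε hz]
  exact hre ▸ neg_of_mul_neg_left this (sq_nonneg _)

theorem isBigO_principal_of_isBigO_cocompact {X E F : Type*} [TopologicalSpace X]
    [NormedAddCommGroup E] [NormedAddCommGroup F] {f : X → E} {g : X → F} {S : Set X}
    (hS : IsClosed S) (hf : ContinuousOn f S) (hg : ContinuousOn g S) (hg0 : ∀ x ∈ S, g x ≠ 0)
    (h : f =O[cocompact X] g) : f =O[𝓟 S] g := by
  obtain ⟨C, hC⟩ := h.bound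
  obtain ⟨K, hK, hKC⟩ := mem_cocompact.mp hC
  have hSK : IsCompact (S ∩ K) := hK.inter_left hS
  have near : f =O[𝓟 (S ∩ K)] g :=
    ((hf.mono Set.inter_subset_left).isBigO_principal hSK (by simp)).trans
      ((hg.mono Set.inter_subset_left).isBigO_rev_principal hSK (fun x hx => hg0 x hx.1) (1 : ℝ))
  have far : f =O[𝓟 Kᶜ] g := isBigO_principal.mpr ⟨C, fun x hx => hKC hx⟩
  refine (near.sup far).mono ?_
  rw [sup_principal, principal_mono]
  exact fun x hx => (em (x ∈ K)).imp (fun hxK => ⟨hx, hxK⟩) id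

theorem eventually_re_neg_of_mul_eval_eq {P Q : ℂ[X]} (hP0 : P.eval 0 ≠ 0)
    (hc : (Q.eval 0 / P.eval 0).re ≠ 0) :
    ∀ᶠ z in 𝓝 0, ∀ ε : ℝ, ε * (Q.eval 0 / P.eval 0).re < 0 →
      z * P.eval z = ε * Q.eval z → z.re < 0 := by
  filter_upwards [eventually_re_neg_of_eq_ofReal_mul (f := fun z => Q.eval z / P.eval z)
    (Q.continuousAt.div P.continuousAt hP0) hc, P.continuousAt.eventually_ne hP0]
    with z hz hPz ε hε hroot
  exact hz ε hε (by rw [← mul_div_assoc, eq_div_iff hPz, hroot])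

theorem exists_pos_forall_eval_ne_mul_eval {A Q : ℂ[X]} {S : Set ℂ} (hS : IsClosed S)
    (hA : ∀ z ∈ S, A.eval z ≠ 0) (hdeg : Q.degree ≤ A.degree) :
    ∃ ε₀ > 0, ∀ ε : ℂ, ‖ε‖ < ε₀ → ∀ z ∈ S, A.eval z ≠ ε * Q.eval z := by
  obtain ⟨C, hC, hbound⟩ := (isBigO_principal_of_isBigO_cocompact hS Q.continuous.continuousOn
    A.continuous.continuousOn hA
    (Metric.cobounded_eq_cocompact (α := ℂ) ▸ isBigO_cobounded_of_degree_le hdeg)).exists_pos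
  refine ⟨C⁻¹, inv_pos.mpr hC, fun ε hε z hz hroot => ?_⟩
  have hQA : ‖Q.eval z‖ ≤ C * ‖A.eval z‖ := isBigOWith_principal.mp hbound z hz
  have hpos : 0 < ‖A.eval z‖ := norm_pos_iff.mpr (hA z hz)
  have hεC : ‖ε‖ * C < 1 := by rwa [← lt_div_iff₀ hC, one_div]
  have : ‖A.eval z‖ ≤ ‖ε‖ * C * ‖A.eval z‖ := by
    calc ‖A.eval z‖ = ‖ε‖ * ‖Q.eval z‖ := by rw [hroot, norm_mul]
      _ ≤ ‖ε‖ * (C * ‖A.eval z‖) := by gcongr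
      _ = _ := by ring
  nlinarith

theorem eval_map_X_mul_sub_C_mul (p q : ℝ[X]) (ε : ℝ) (z : ℂ) :
    ((X * p - C ε * q).map (algebraMap ℝ ℂ)).eval z =
      z * (p.map (algebraMap ℝ ℂ)).eval z - ε * (q.map (algebraMap ℝ ℂ)).eval z := by
  simp

/-- root-locus perturbation with a simple marginal mode at the origin. -/
theorem stmt3 (phat q : Polynomial ℝ)
    (hstable : ∀ z : ℂ, (phat.map (algebraMap ℝ ℂ)).eval z = 0 → z.re < 0)
    (hq0 : q.eval 0 ≠ 0)
    (hdeg : q.degree < 1 + phat.degree) :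
    ∃ σ : ℝ, (σ = 1 ∨ σ = -1) ∧ ∃ ε₀ : ℝ, 0 < ε₀ ∧
      ∀ ε : ℝ, 0 < σ * ε → σ * ε < ε₀ →
        ∀ z : ℂ, ((Polynomial.X * phat - Polynomial.C ε * q).map (algebraMap ℝ ℂ)).eval z = 0 →
          z.re < 0 := by
  set P := phat.map (algebraMap ℝ ℂ)
  set Q := q.map (algebraMap ℝ ℂ)
  have hP0 : P.eval 0 ≠ 0 := fun h => (hstable 0 h).false
  set c := q.eval 0 / phat.eval 0
  have hc : Q.eval 0 / P.eval 0 = c := by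
    simp only [P, Q, c, eval_zero_map, Complex.coe_algebraMap, Complex.ofReal_div]
  have hc0 : c ≠ 0 := div_ne_zero hq0 fun h => hP0 (by simp only [P, eval_zero_map, h, map_zero])
  obtain ⟨σ, hσ, hσε⟩ := exists_sign_forall_mul_neg hc0
  obtain ⟨r, hr, hnear⟩ := Metric.eventually_nhds_iff.mp
    (eventually_re_neg_of_mul_eval_eq (Q := Q) hP0 (by simpa [hc] using hc0))
  have hXP : ∀ z ∈ {z : ℂ | 0 ≤ z.re ∧ r ≤ ‖z‖}, (X * P).eval z ≠ 0 := by
    rintro z ⟨hre, hrz⟩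
    rw [eval_mul, eval_X]
    exact mul_ne_zero (norm_pos_iff.mp (hr.trans_le hrz)) fun h => (hstable z h).not_ge hre
  have hdeg' : Q.degree ≤ (X * P).degree := by
    rw [degree_map, X_mul, degree_mul_X, degree_map, add_comm]
    exact hdeg.le
  obtain ⟨ε₀, hε₀, hfar⟩ := exists_pos_forall_eval_ne_mul_eval
    ((isClosed_le continuous_const Complex.continuous_re).inter
      (isClosed_le continuous_const continuous_norm)) hXP hdeg'
  refine ⟨σ, hσ, ε₀, hε₀, fun ε hε hεε₀ z hz => ?_⟩
  obtain ⟨hεc, habs⟩ := hσε ε hε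
  have hroot : z * P.eval z = ε * Q.eval z := by
    rwa [eval_map_X_mul_sub_C_mul, sub_eq_zero] at hz
  by_cases hzr : ‖z‖ < r
  · exact hnear (by simpa using hzr) ε (by simpa [hc] using hεc) hroot
  · by_contra! hre
    refine hfar ε (by simpa [habs] using hεε₀) z ⟨hre, not_lt.mp hzr⟩ ?_
    rwa [eval_mul, eval_X]
end

section
/- (Root-locus perturbation, marginal mode at a conjugate pair.) Let ω_c > 0, and let p̃(s) and q(s) be real polynomials such that every root of p̃ has negative real part, deg q < 2 + deg p̃, q(iω_c) ≠ 0, and Re( q(iω_c) / (2iω_c · p̃(iω_c)) ) ≠ 0. Set p(s) := (s² + ω_c²) p̃(s). Then there exist a sign σ ∈ {+1, −1} and ε₀ > 0 such that for every real ε with 0 < σε < ε₀, every root of the polynomial p(s) − ε q(s) has negative real part. -/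
open Polynomial

/-!
Write `z₀ = iω_c` and `D(s) = (s + z₀) p̃(s)`, so that `p = (s - z₀) D`. On the closed quarter plane
`Re s ≥ 0, Im s ≥ 0` the polynomial `D` has no zeros, and `deg q ≤ deg D`, so `g = q / D` is bounded
there. A root `z` of `p - ε q` in that quarter plane satisfies `z - z₀ = ε g(z)`: it lies within
`O(|ε|)` of `z₀`, where `Re g` has the sign of `Re g(z₀) ≠ 0`, so `Re z = ε Re g(z) < 0` once `ε` is
small and of sign opposite to `Re g(z₀)`. Roots of the real polynomial `p - ε q` come in conjugate
pairs, which takes care of the lower half plane.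
-/

open Filter Topology

namespace Polynomial

theorem exists_norm_eval_div_le_of_degree_le {𝕜 : Type*} [NontriviallyNormedField 𝕜]
    [ProperSpace 𝕜] {P Q : 𝕜[X]} {S : Set 𝕜} (hS : IsClosed S) (hdeg : Q.degree ≤ P.degree)
    (hP : ∀ z ∈ S, P.eval z ≠ 0) : ∃ B, ∀ z ∈ S, ‖Q.eval z / P.eval z‖ ≤ B := by
  obtain ⟨C, hC⟩ := (isBigO_cobounded_of_degree_le hdeg).bound
  obtain ⟨R, -, hR⟩ := hasBasis_cobounded_norm.eventually_iff.1 hC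
  have hcont : ContinuousOn (fun z => Q.eval z / P.eval z) (Metric.closedBall 0 R ∩ S) :=
    Q.continuousOn.div P.continuousOn fun z hz => hP z hz.2
  obtain ⟨B, hB⟩ :=
    ((isCompact_closedBall 0 R).inter_right hS).exists_bound_of_continuousOn hcont
  refine ⟨max B C, fun z hz => ?_⟩
  rcases le_total ‖z‖ R with hzR | hzR
  · exact (hB z ⟨by simpa using hzR, hz⟩).trans (le_max_left _ _)
  · rw [norm_div, div_le_iff₀ (norm_pos_iff.2 (hP z hz))]
    exact (hR hzR).trans (mul_le_mul_of_nonneg_right (le_max_right _ _) (norm_nonneg _))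

theorem degree_le_one_add_of_degree_lt_two_add {R : Type*} [Semiring R] {p q : R[X]}
    (h : q.degree < 2 + p.degree) : q.degree ≤ 1 + p.degree := by
  rcases eq_or_ne p 0 with rfl | hp
  · simp at h
  rcases eq_or_ne q 0 with rfl | hq
  · simp
  rw [degree_eq_natDegree hq, degree_eq_natDegree hp] at *
  norm_cast at *
  omega

theorem eval_map_conj (p : ℝ[X]) (z : ℂ) :
    (p.map (algebraMap ℝ ℂ)).eval ((starRingEnd ℂ) z) =
      (starRingEnd ℂ) ((p.map (algebraMap ℝ ℂ)).eval z) := by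
  simpa only [aeval_def, eval₂_eq_eval_map] using aeval_conj p z

theorem re_neg_of_root_of_forall_im_nonneg {p : ℝ[X]}
    (h : ∀ z : ℂ, (p.map (algebraMap ℝ ℂ)).eval z = 0 → 0 ≤ z.im → z.re < 0)
    (z : ℂ) (hz : (p.map (algebraMap ℝ ℂ)).eval z = 0) : z.re < 0 := by
  rcases le_total 0 z.im with him | him
  · exact h z hz him
  · simpa using h ((starRingEnd ℂ) z) (by rw [eval_map_conj, hz, map_zero]) (by simpa using him)

theorem eval_map_X_sq_add_C_mul_sub (ω ε : ℝ) (p q : ℝ[X]) (z : ℂ) :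
    (((X ^ 2 + C (ω ^ 2)) * p - C ε * q).map (algebraMap ℝ ℂ)).eval z =
      (z - ω * Complex.I) * ((X + C ((ω : ℂ) * Complex.I)) * p.map (algebraMap ℝ ℂ)).eval z -
        ε * (q.map (algebraMap ℝ ℂ)).eval z := by
  simp only [Polynomial.map_sub, Polynomial.map_mul, Polynomial.map_add, Polynomial.map_pow,
    map_X, map_C, eval_sub, eval_mul, eval_add, eval_pow, eval_X, eval_C, Complex.coe_algebraMap,
    Complex.ofReal_pow]
  linear_combination (eval z (p.map (algebraMap ℝ ℂ)) * ω ^ 2) * Complex.I_sq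

end Polynomial

theorem exists_sign_mul_neg {r : ℝ} (hr : r ≠ 0) : ∃ σ : ℝ, (σ = 1 ∨ σ = -1) ∧ σ * r < 0 := by
  rcases hr.lt_or_gt with hr | hr
  · exact ⟨1, Or.inl rfl, by linarith⟩
  · exact ⟨-1, Or.inr rfl, by linarith⟩

theorem Complex.exists_re_neg_of_sub_eq_mul {g : ℂ → ℂ} {z₀ : ℂ} {S : Set ℂ} {B : ℝ}
    (hz₀ : z₀.re = 0) (hg : ContinuousAt g z₀) (hr : (g z₀).re ≠ 0) (hB : ∀ z ∈ S, ‖g z‖ ≤ B) :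
    ∃ σ : ℝ, (σ = 1 ∨ σ = -1) ∧ ∃ ε₀ : ℝ, 0 < ε₀ ∧ ∀ ε : ℝ, 0 < σ * ε → σ * ε < ε₀ →
      ∀ z ∈ S, z - z₀ = ε * g z → z.re < 0 := by
  set r := (g z₀).re
  obtain ⟨σ, hσ, hσr⟩ := exists_sign_mul_neg hr
  have hsign : ∀ᶠ z in 𝓝 z₀, 0 < r * (g z).re :=
    ((continuous_re.continuousAt.comp hg).const_mul r).eventually
      (lt_mem_nhds (mul_self_pos.2 hr))
  obtain ⟨δ, hδ, hδsign⟩ := Metric.eventually_nhds_iff.1 hsign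
  set B' := max B 1
  refine ⟨σ, hσ, δ / B', by positivity, fun ε hε hεδ z hz hzeq => ?_⟩
  have habs : |ε| = σ * ε := by
    rw [← abs_of_pos hε, abs_mul]
    rcases hσ with rfl | rfl <;> simp
  have hclose : dist z z₀ < δ := calc
    dist z z₀ = |ε| * ‖g z‖ := by rw [dist_eq_norm, hzeq, norm_mul, norm_real, Real.norm_eq_abs]
    _ ≤ |ε| * B' := by gcongr; exact (hB z hz).trans (le_max_left _ _)
    _ < δ := by rw [habs]; exact (lt_div_iff₀ (by positivity)).1 hεδ
  have hre : z.re = ε * (g z).re := by simpa [hz₀] using congrArg re hzeq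
  have := hδsign hclose
  rw [hre]
  nlinarith

theorem stmt4_general (ωc : ℝ) (hωc : 0 < ωc) (ptil q : Polynomial ℝ)
    (hstable : ∀ z : ℂ, (ptil.map (algebraMap ℝ ℂ)).eval z = 0 → z.re < 0)
    (hdeg : q.degree < 2 + ptil.degree)
    (hre : ((q.map (algebraMap ℝ ℂ)).eval ((ωc : ℂ) * Complex.I) /
        (2 * ((ωc : ℂ) * Complex.I) * (ptil.map (algebraMap ℝ ℂ)).eval ((ωc : ℂ) * Complex.I))).re
        ≠ 0) :
    ∃ σ : ℝ, (σ = 1 ∨ σ = -1) ∧ ∃ ε₀ : ℝ, 0 < ε₀ ∧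
      ∀ ε : ℝ, 0 < σ * ε → σ * ε < ε₀ →
        ∀ z : ℂ, (((Polynomial.X ^ 2 + Polynomial.C (ωc ^ 2)) * ptil -
            Polynomial.C ε * q).map (algebraMap ℝ ℂ)).eval z = 0 → z.re < 0 := by
  set z₀ : ℂ := ωc * Complex.I
  set D : ℂ[X] := (X + C z₀) * ptil.map (algebraMap ℝ ℂ)
  set S : Set ℂ := {z | 0 ≤ z.re ∧ 0 ≤ z.im}
  have hD : ∀ z ∈ S, D.eval z ≠ 0 := by
    rintro z ⟨hzre, hzim⟩
    have hz : z + z₀ ≠ 0 := fun h => by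
      have := congrArg Complex.im h
      simp [z₀] at this
      linarith
    rw [eval_mul, eval_add, eval_X, eval_C]
    exact mul_ne_zero hz fun h => (hstable z h).not_ge hzre
  have hdegD : (q.map (algebraMap ℝ ℂ)).degree ≤ D.degree := by
    rw [degree_map, degree_mul, degree_X_add_C, degree_map]
    exact degree_le_one_add_of_degree_lt_two_add hdeg
  obtain ⟨B, hB⟩ := exists_norm_eval_div_le_of_degree_le
    ((isClosed_le continuous_const Complex.continuous_re).inter
      (isClosed_le continuous_const Complex.continuous_im)) hdegD hD
  have hz₀S : z₀ ∈ S := ⟨by simp [z₀], by simp [z₀, hωc.le]⟩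
  have hg : ContinuousAt (fun z => (q.map (algebraMap ℝ ℂ)).eval z / D.eval z) z₀ :=
    (Polynomial.continuousAt _).div (Polynomial.continuousAt _) (hD z₀ hz₀S)
  have hr : ((q.map (algebraMap ℝ ℂ)).eval z₀ / D.eval z₀).re ≠ 0 := by
    simpa [D, two_mul] using hre
  obtain ⟨σ, hσ, ε₀, hε₀, hroot⟩ := Complex.exists_re_neg_of_sub_eq_mul (by simp [z₀]) hg hr hB
  refine ⟨σ, hσ, ε₀, hε₀, fun ε hε hεε₀ =>
    re_neg_of_root_of_forall_im_nonneg fun z hz hzim => ?_⟩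
  refine lt_of_not_ge fun hzre => (hroot ε hε hεε₀ z ⟨hzre, hzim⟩ ?_).not_ge hzre
  rw [eval_map_X_sq_add_C_mul_sub, sub_eq_zero] at hz
  rw [mul_div_assoc', eq_div_iff (hD z ⟨hzre, hzim⟩), hz]

/-- root-locus perturbation with a simple marginal conjugate pair `±iω_c`. -/
theorem stmt4 (ωc : ℝ) (hωc : 0 < ωc) (ptil q : Polynomial ℝ)
    (hstable : ∀ z : ℂ, (ptil.map (algebraMap ℝ ℂ)).eval z = 0 → z.re < 0)
    (hdeg : q.degree < 2 + ptil.degree)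
    (hq : (q.map (algebraMap ℝ ℂ)).eval ((ωc : ℂ) * Complex.I) ≠ 0)
    (hre : ((q.map (algebraMap ℝ ℂ)).eval ((ωc : ℂ) * Complex.I) /
        (2 * ((ωc : ℂ) * Complex.I) * (ptil.map (algebraMap ℝ ℂ)).eval ((ωc : ℂ) * Complex.I))).re
        ≠ 0) :
    ∃ σ : ℝ, (σ = 1 ∨ σ = -1) ∧ ∃ ε₀ : ℝ, 0 < ε₀ ∧
      ∀ ε : ℝ, 0 < σ * ε → σ * ε < ε₀ →
        ∀ z : ℂ, (((Polynomial.X ^ 2 + Polynomial.C (ωc ^ 2)) * ptil -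
            Polynomial.C ε * q).map (algebraMap ℝ ℂ)).eval z = 0 → z.re < 0 :=
  stmt4_general ωc hωc ptil q hstable hdeg hre
end

section
/- Let g(s) be a strictly proper real rational function with no poles on the imaginary axis, an odd total number (with multiplicity) of poles with positive real part, and g(0) ≠ 0. Suppose the constant perturbation δ₀ := 1/g(0) achieves 0-stability for g, i.e., writing g = n/d coprime, the characteristic polynomial d(s) − (1/g(0)) n(s) has a simple root at 0 and all other roots with negative real part. Then the robust instability radius is exactly ρ*(g) = 1/|g(0)|. -/
open Polynomial

/-!
The sign of `p(0) · lc(p)` for a real polynomial `p` without roots on the imaginary axis is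
`(-1)^k`, where `k` is the number of its roots in the open right half plane: split off a real
root `r` (contributing the factor `-r`) or a conjugate pair (contributing `|z|² > 0`).

Lower bound. If `δ = b/a` stabilizes `g = n/d`, then `a` and `a d - b n` are stable, while `d`
has an odd number of unstable poles, so `a(0) d(0)` and `a(0) d(0) - b(0) n(0)` have opposite
signs (both leading coefficients equal `lc(a) lc(d)` since `g` is strictly proper). Hence
`|b(0) n(0)| > |a(0) d(0)|`, i.e. `‖δ‖_{H∞} ≥ |δ(0)| > 1/|g(0)|`.

Upper bound. Write `d - n/g(0) = s h`, with `h` stable by `0`-stability. The characteristic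
polynomial of the constant `δ = (1 + ε)/g(0)` is `s h(s) - ε n(s)/g(0)`. For small `ε > 0`, a
root `s` near `0` satisfies `s = ε n(s) / (g(0) h(s))`, whose real part is negative because at
`s = 0` the quotient is `ε d(0)/h(0) < 0` (by the same sign count); away from `0`, `|s h(s)|`
dominates `|n(s)|` on the closed right half plane, so no root lies there either.
-/

open Filter Topology

theorem eval_map_ofReal (p : ℝ[X]) (x : ℝ) :
    (p.map (algebraMap ℝ ℂ)).eval (x : ℂ) = p.eval x := by
  rw [eval_map_algebraMap]
  exact aeval_ofReal p x

theorem eval_zero_ne_zero_of_re_ne_zero {p : ℝ[X]}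
    (hp : ∀ z : ℂ, (p.map (algebraMap ℝ ℂ)).eval z = 0 → z.re ≠ 0) : p.eval 0 ≠ 0 := fun h0 =>
  hp 0 (by rw [eval_zero_map, h0, map_zero]) Complex.zero_re

theorem re_ne_zero_of_eval_eq_zero {P : ℂ[X]} (hP : ∀ ω : ℝ, P.eval (ω * Complex.I) ≠ 0)
    {z : ℂ} (hz : P.eval z = 0) : z.re ≠ 0 := fun hre =>
  hP z.im (by rwa [show (z.im : ℂ) * Complex.I = z from Complex.ext (by simp [hre]) (by simp)])

theorem pos_mul_iff_even_add {α : Type*} [Ring α] [LinearOrder α] [IsStrictOrderedRing α]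
    {x y : α} {m k : ℕ} (hx : x ≠ 0) (hy : y ≠ 0)
    (hxm : 0 < x ↔ Even m) (hyk : 0 < y ↔ Even k) : 0 < x * y ↔ Even (m + k) := by
  rw [Nat.even_add, ← hxm, ← hyk]
  rcases hx.lt_or_gt with hx | hx <;> rcases hy.lt_or_gt with hy | hy <;>
    simp [hx, hy, mul_pos_iff, hx.le, hy.le, not_lt.2]

theorem orhpCount_mul {p q : ℝ[X]} (hp : p ≠ 0) (hq : q ≠ 0) :
    orhpCount (p * q) = orhpCount p + orhpCount q := by
  have hpq : (p * q).map (algebraMap ℝ ℂ) ≠ 0 := by simp [hp, hq]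
  rw [orhpCount, Polynomial.map_mul, roots_mul (by simpa using hpq), Multiset.filter_add,
    Multiset.card_add, orhpCount, orhpCount]

theorem orhpCount_X_sub_C (r : ℝ) : orhpCount (X - C r) = if 0 < r then 1 else 0 := by
  rw [orhpCount, Polynomial.map_sub, map_X, map_C, roots_X_sub_C, Multiset.filter_singleton]
  split_ifs <;> simp_all

theorem even_orhpCount_quadratic (z : ℂ) :
    Even (orhpCount (X ^ 2 - C (2 * z.re) * X + C (‖z‖ ^ 2))) := by
  have hmap : (X ^ 2 - C (2 * z.re) * X + C (‖z‖ ^ 2)).map (algebraMap ℝ ℂ)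
      = (X - C ((starRingEnd ℂ) z)) * (X - C z) := by
    simp only [Polynomial.map_add, Polynomial.map_sub, Polynomial.map_mul, Polynomial.map_pow,
      map_X, map_C]
    rw [show algebraMap ℝ ℂ (2 * z.re) = z + (starRingEnd ℂ) z by simp [Complex.add_conj],
      show algebraMap ℝ ℂ (‖z‖ ^ 2) = (starRingEnd ℂ) z * z by simp [Complex.conj_mul']]
    simp only [map_add, map_mul]
    ring
  rw [orhpCount, hmap, roots_mul (mul_ne_zero (X_sub_C_ne_zero _) (X_sub_C_ne_zero _)),
    roots_X_sub_C, roots_X_sub_C, Multiset.filter_add, Multiset.filter_singleton,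
    Multiset.filter_singleton, Complex.conj_re]
  split_ifs <;> simp

theorem exists_factor_pos_iff_even_orhpCount (p : ℝ[X]) {z : ℂ}
    (hz : (p.map (algebraMap ℝ ℂ)).eval z = 0) (hre : z.re ≠ 0) :
    ∃ f q, p = f * q ∧ 0 < f.natDegree ∧
      (0 < f.eval 0 * f.leadingCoeff ↔ Even (orhpCount f)) := by
  by_cases him : z.im = 0
  · rw [show z = (z.re : ℂ) from Complex.ext rfl (by simp [him]), eval_map_ofReal,
      Complex.ofReal_eq_zero] at hz
    obtain ⟨q, hq⟩ := dvd_iff_isRoot.2 hz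
    refine ⟨X - C z.re, q, hq, by simp, ?_⟩
    rw [orhpCount_X_sub_C, leadingCoeff_X_sub_C, mul_one, eval_sub, eval_X, eval_C, zero_sub,
      neg_pos]
    rcases hre.lt_or_gt with h | h <;> simp [h, h.not_gt]
  · obtain ⟨q, hq⟩ := p.quadratic_dvd_of_aeval_eq_zero_im_ne_zero
      (by rwa [aeval_def, ← eval_map]) him
    have hz0 : z ≠ 0 := by rintro rfl; exact hre rfl
    have hmonic : (X ^ 2 - C (2 * z.re) * X + C (‖z‖ ^ 2)).Monic := by monicity!
    have hdeg : (X ^ 2 - C (2 * z.re) * X + C (‖z‖ ^ 2)).natDegree = 2 := by compute_degree!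
    refine ⟨_, q, hq, by omega, iff_of_true ?_ (even_orhpCount_quadratic z)⟩
    rw [hmonic.leadingCoeff]
    simpa using pow_pos (norm_pos_iff.2 hz0) 2

theorem pos_eval_zero_mul_leadingCoeff_iff_even_orhpCount (p : ℝ[X])
    (hp : ∀ z : ℂ, (p.map (algebraMap ℝ ℂ)).eval z = 0 → z.re ≠ 0) :
    0 < p.eval 0 * p.leadingCoeff ↔ Even (orhpCount p) := by
  induction hdeg : p.natDegree using Nat.strong_induction_on generalizing p with
  | _ k ih =>
    have hp0 := eval_zero_ne_zero_of_re_ne_zero hp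
    rcases Nat.eq_zero_or_pos k with rfl | hk
    · rw [eq_C_of_natDegree_eq_zero hdeg] at hp0 ⊢
      simp only [eval_C, leadingCoeff_C, orhpCount, map_C, roots_C, Multiset.filter_zero,
        Multiset.card_zero, Even.zero, iff_true]
      exact mul_self_pos.2 (by simpa using hp0)
    obtain ⟨z, hz⟩ := Complex.exists_root <| by
      rw [degree_map p (algebraMap ℝ ℂ)]
      exact natDegree_pos_iff_degree_pos.1 (hdeg ▸ hk)
    obtain ⟨f, q, rfl, hf, hfs⟩ := exists_factor_pos_iff_even_orhpCount p hz (hp z hz)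
    have hf0 : f ≠ 0 := by rintro rfl; simp at hf
    have hq0 : q ≠ 0 := by rintro rfl; simp at hp0
    have hq : ∀ w : ℂ, (q.map (algebraMap ℝ ℂ)).eval w = 0 → w.re ≠ 0 := fun w hw =>
      hp w (by simp [hw])
    rw [eval_mul, leadingCoeff_mul, orhpCount_mul hf0 hq0, mul_mul_mul_comm]
    rw [eval_mul] at hp0
    refine pos_mul_iff_even_add (mul_ne_zero (left_ne_zero_of_mul hp0) (leadingCoeff_ne_zero.2 hf0))
      (mul_ne_zero (right_ne_zero_of_mul hp0) (leadingCoeff_ne_zero.2 hq0)) hfs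
      (ih _ ?_ q hq rfl)
    rw [← hdeg, natDegree_mul hf0 hq0]
    omega

theorem eval_zero_mul_leadingCoeff_pos_of_stableRat {p : ℝ[X]} (hp : StableRat p) :
    0 < p.eval 0 * p.leadingCoeff := by
  rw [pos_eval_zero_mul_leadingCoeff_iff_even_orhpCount p fun z hz => (hp z hz).ne]
  have : orhpCount p = 0 := Multiset.card_eq_zero.2 <| Multiset.filter_eq_nil.2 fun z hz hre =>
    (hp z (mem_roots'.1 hz).2).not_gt hre
  simp [this]

theorem eval_zero_mul_leadingCoeff_neg_of_odd {p : ℝ[X]}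
    (hp : ∀ z : ℂ, (p.map (algebraMap ℝ ℂ)).eval z = 0 → z.re ≠ 0) (hodd : Odd (orhpCount p)) :
    p.eval 0 * p.leadingCoeff < 0 := by
  have hp0 : p ≠ 0 := by rintro rfl; exact hp 0 (by simp) rfl
  refine lt_of_le_of_ne (not_lt.1 fun h => ?_)
    (mul_ne_zero (eval_zero_ne_zero_of_re_ne_zero hp) (leadingCoeff_ne_zero.2 hp0))
  exact Nat.not_even_iff_odd.2 hodd ((pos_eval_zero_mul_leadingCoeff_iff_even_orhpCount p hp).1 h)

theorem exists_norm_eval_le_mul_norm_eval {𝕜 : Type*} [NormedField 𝕜] [ProperSpace 𝕜]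
    {p q : 𝕜[X]} (hpq : p.degree ≤ q.degree) {S : Set 𝕜}
    (hS : IsClosed S) (hqS : ∀ z ∈ S, q.eval z ≠ 0) :
    ∃ K, ∀ z ∈ S, ‖p.eval z‖ ≤ K * ‖q.eval z‖ := by
  obtain ⟨K₁, hK₁⟩ := (isBigO_cobounded_of_degree_le hpq).bound
  obtain ⟨R, -, hR⟩ := hasBasis_cobounded_norm.eventually_iff.mp hK₁
  have hcpt : IsCompact (S ∩ Metric.closedBall 0 R) := (isCompact_closedBall 0 R).inter_left hS
  obtain ⟨K₂, hK₂⟩ := hcpt.bddAbove_image (f := fun z => ‖p.eval z‖ / ‖q.eval z‖)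
    (p.continuous.norm.continuousOn.div q.continuous.norm.continuousOn
      fun z hz => norm_ne_zero_iff.2 (hqS z hz.1))
  refine ⟨max K₁ K₂, fun z hz => ?_⟩
  rcases le_or_gt R ‖z‖ with hzR | hzR
  · exact (hR hzR).trans (by gcongr; exact le_max_left _ _)
  · have hq : 0 < ‖q.eval z‖ := norm_pos_iff.2 (hqS z hz)
    have := hK₂ ⟨z, ⟨hz, by simpa using hzR.le⟩, rfl⟩
    rw [div_le_iff₀ hq] at this
    exact this.trans (by gcongr; exact le_max_right _ _)

theorem norm_ratEval_le_hinfNorm_s5 {b a : ℝ[X]} (hba : b.degree ≤ a.degree)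
    (ha : ∀ ω : ℝ, (a.map (algebraMap ℝ ℂ)).eval (ω * Complex.I) ≠ 0) (ω : ℝ) :
    ‖ratEval b a (ω * Complex.I)‖ ≤ hinfNorm b a := by
  refine le_ciSup (f := fun ω : ℝ => ‖ratEval b a (ω * Complex.I)‖) ?_ ω
  obtain ⟨K, hK⟩ := exists_norm_eval_le_mul_norm_eval (p := b.map (algebraMap ℝ ℂ))
    (q := a.map (algebraMap ℝ ℂ)) (by simpa using hba)
    (isClosed_eq Complex.continuous_re continuous_const) fun z hz h0 =>
      re_ne_zero_of_eval_eq_zero ha h0 hz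
  refine ⟨K, Set.forall_mem_range.2 fun ω => ?_⟩
  rw [ratEval, norm_div, div_le_iff₀ (norm_pos_iff.2 (ha ω))]
  exact hK _ (by simp)

theorem hinfNorm_C_one (e : ℝ) : hinfNorm (C e) 1 = |e| := by
  simp [hinfNorm, ratEval]

theorem leadingCoeff_mul_sub_mul {R : Type*} [Ring R] [NoZeroDivisors R] {a b d n : R[X]}
    (ha : a ≠ 0) (hba : b.degree ≤ a.degree) (hnd : n.degree < d.degree) :
    (a * d - b * n).leadingCoeff = a.leadingCoeff * d.leadingCoeff := by
  refine (leadingCoeff_sub_of_degree_lt ?_).trans (leadingCoeff_mul a d)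
  calc (b * n).degree ≤ b.degree + n.degree := degree_mul_le _ _
    _ ≤ a.degree + n.degree := add_le_add_left hba _
    _ < a.degree + d.degree := WithBot.add_lt_add_left (degree_ne_bot.2 ha) hnd
    _ = (a * d).degree := degree_mul.symm

theorem abs_lt_abs_of_mul_neg_of_mul_sub_pos {α : Type*} [CommRing α] [LinearOrder α]
    [IsStrictOrderedRing α] {x y L : α} (hx : x * L < 0) (hxy : 0 < (x - y) * L) :
    |x| < |y| := by
  rcases lt_or_gt_of_ne (show L ≠ 0 by rintro rfl; simp at hx) with hL | hL
  · have : 0 < x := by nlinarith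
    rw [abs_of_pos this, abs_of_pos (by nlinarith)]
    nlinarith
  · have : x < 0 := by nlinarith
    rw [abs_of_neg this, abs_of_neg (by nlinarith)]
    nlinarith

theorem abs_mul_lt_abs_mul_of_stabilizes {b a n d : ℝ[X]} (hst : Stabilizes b a n d)
    (hnd : n.degree < d.degree) (hd : ∀ z : ℂ, (d.map (algebraMap ℝ ℂ)).eval z = 0 → z.re ≠ 0)
    (hodd : Odd (orhpCount d)) : |a.eval 0 * d.eval 0| < |b.eval 0 * n.eval 0| := by
  obtain ⟨ha, -, hba, hastab, hchar⟩ := hst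
  have hchar := eval_zero_mul_leadingCoeff_pos_of_stableRat hchar
  rw [leadingCoeff_mul_sub_mul ha hba hnd, eval_sub, eval_mul, eval_mul] at hchar
  refine abs_lt_abs_of_mul_neg_of_mul_sub_pos ?_ hchar
  have := mul_neg_of_pos_of_neg (eval_zero_mul_leadingCoeff_pos_of_stableRat hastab)
    (eval_zero_mul_leadingCoeff_neg_of_odd hd hodd)
  linarith

theorem abs_div_le_hinfNorm_of_stabilizes {b a n d : ℝ[X]} (hst : Stabilizes b a n d)
    (hnd : n.degree < d.degree) (hd : ∀ z : ℂ, (d.map (algebraMap ℝ ℂ)).eval z = 0 → z.re ≠ 0)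
    (hodd : Odd (orhpCount d)) : |d.eval 0 / n.eval 0| ≤ hinfNorm b a := by
  have hlt := abs_mul_lt_abs_mul_of_stabilizes hst hnd hd hodd
  obtain ⟨-, -, hba, hastab, -⟩ := hst
  have ha0 : a.eval 0 ≠ 0 := fun h0 => by
    simpa using hastab 0 (by rw [eval_zero_map, h0, map_zero])
  have hn0 : n.eval 0 ≠ 0 := fun h0 => by
    rw [h0, mul_zero, abs_zero] at hlt
    exact (abs_nonneg _).not_gt hlt
  calc |d.eval 0 / n.eval 0| ≤ |b.eval 0 / a.eval 0| := by
        rw [abs_div, abs_div, div_le_div_iff₀ (abs_pos.2 hn0) (abs_pos.2 ha0), ← abs_mul,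
          ← abs_mul, mul_comm (d.eval 0)]
        exact hlt.le
    _ = ‖ratEval b a ((0 : ℝ) * Complex.I)‖ := by
        rw [Complex.ofReal_zero, zero_mul, ratEval, eval_zero_map, eval_zero_map,
          Complex.coe_algebraMap, ← Complex.ofReal_div, Complex.norm_real,
          Real.norm_eq_abs]
    _ ≤ hinfNorm b a := norm_ratEval_le_hinfNorm_s5 hba
        (fun ω h0 => (hastab _ h0).ne (by simp)) 0

theorem eventually_re_neg_of_mul_eval_eq_mul_eval {H M : ℂ[X]} (hH : ∀ z, H.eval z = 0 → z.re < 0)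
    (hdeg : M.degree ≤ (X * H).degree) (hM0 : (M.eval 0 / H.eval 0).re < 0) :
    ∀ᶠ ε : ℝ in 𝓝[>] 0, ∀ z : ℂ, z * H.eval z = ε * M.eval z → z.re < 0 := by
  have hH0 : H.eval 0 ≠ 0 := fun h => by simpa using hH 0 h
  have hnear : ∀ᶠ z in 𝓝 (0 : ℂ), H.eval z ≠ 0 ∧ (M.eval z / H.eval z).re < 0 :=
    (H.continuous.continuousAt.eventually_ne hH0).and <|
      (Complex.continuous_re.continuousAt.comp
        (M.continuous.continuousAt.div H.continuous.continuousAt hH0)).eventually_lt_const hM0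
  obtain ⟨r, hr, hball⟩ := Metric.eventually_nhds_iff.1 hnear
  obtain ⟨K, hK⟩ := exists_norm_eval_le_mul_norm_eval hdeg
    (S := {z | r ≤ ‖z‖ ∧ 0 ≤ z.re})
    ((isClosed_le continuous_const continuous_norm).inter
      (isClosed_le continuous_const Complex.continuous_re))
    fun z hz => by
      rw [eval_mul, eval_X]
      exact mul_ne_zero (norm_pos_iff.1 (hr.trans_le hz.1)) fun h => (hH z h).not_ge hz.2
  have hsmall : ∀ᶠ ε in 𝓝[>] (0 : ℝ), ε * K < 1 :=
    nhdsWithin_le_nhds <| (continuous_id.mul continuous_const).tendsto' 0 0 (by simp)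
      |>.eventually_lt_const one_pos
  filter_upwards [hsmall, self_mem_nhdsWithin] with ε hεK (hε : 0 < ε) z hz
  by_contra! hre
  rcases lt_or_ge ‖z‖ r with hzr | hzr
  · obtain ⟨hHz, hφ⟩ := hball (by simpa using hzr)
    have : z = ε * (M.eval z / H.eval z) := by
      rw [← mul_div_assoc, ← hz, mul_div_cancel_right₀ _ hHz]
    rw [this, Complex.re_ofReal_mul] at hre
    exact (mul_neg_of_pos_of_neg hε hφ).not_ge hre
  · have hle := hK z ⟨hzr, hre⟩
    rw [eval_mul, eval_X] at hle
    have hpos : 0 < ‖z * H.eval z‖ :=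
      norm_pos_iff.2 (mul_ne_zero (norm_pos_iff.1 (hr.trans_le hzr)) fun h => (hH z h).not_ge hre)
    have : ‖z * H.eval z‖ ≤ ε * K * ‖z * H.eval z‖ := by
      calc ‖z * H.eval z‖ = ε * ‖M.eval z‖ := by
            rw [hz, norm_mul, Complex.norm_real, Real.norm_of_nonneg hε.le]
        _ ≤ ε * (K * ‖z * H.eval z‖) := by gcongr
        _ = ε * K * ‖z * H.eval z‖ := by ring
    nlinarith

theorem eventually_stableRat_X_mul_sub {h m : ℝ[X]} (hh : StableRat h)
    (hdeg : m.degree ≤ (X * h).degree) (hm0 : m.eval 0 * h.eval 0 < 0) :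
    ∀ᶠ ε in 𝓝[>] (0 : ℝ), StableRat (X * h - C ε * m) := by
  have hh0 : h.eval 0 ≠ 0 := fun h0 => by
    simpa using hh 0 (by rw [eval_zero_map, h0, map_zero])
  have hM0 : ((m.map (algebraMap ℝ ℂ)).eval 0 / (h.map (algebraMap ℝ ℂ)).eval 0).re < 0 := by
    rw [eval_zero_map, eval_zero_map, Complex.coe_algebraMap, ← Complex.ofReal_div,
      Complex.ofReal_re, ← mul_div_mul_right _ _ hh0]
    exact div_neg_of_neg_of_pos hm0 (mul_self_pos.2 hh0)
  filter_upwards [eventually_re_neg_of_mul_eval_eq_mul_eval hh (by simpa using hdeg) hM0]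
    with ε hε z hz
  refine hε z ?_
  simpa [sub_eq_zero] using hz

theorem OmegaStable.exists_eq_X_mul {p : ℝ[X]} (hp : OmegaStable p 0) :
    ∃ h, p = X * h ∧ StableRat h := by
  obtain ⟨hmult, -, hroots⟩ := hp
  rw [Complex.ofReal_zero, zero_mul, ← map_zero (algebraMap ℝ ℂ),
    ← eq_rootMultiplicity_map (algebraMap ℝ ℂ).injective] at hmult
  have hp0 : p ≠ 0 := by rintro rfl; simp at hmult
  obtain ⟨h, hph, hndvd⟩ := exists_eq_pow_rootMultiplicity_mul_and_not_dvd p hp0 0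
  rw [hmult, map_zero, sub_zero, pow_one] at hph
  rw [map_zero, sub_zero, X_dvd_iff, coeff_zero_eq_eval_zero] at hndvd
  simp only [Complex.ofReal_zero, zero_mul, neg_zero] at hroots
  refine ⟨h, hph, fun z hz => ?_⟩
  have hz0 : z ≠ 0 := by
    rintro rfl
    rw [eval_zero_map, Complex.coe_algebraMap, Complex.ofReal_eq_zero] at hz
    exact hndvd hz
  exact hroots z (by simp [hph, hz]) hz0 hz0

theorem stableRat_one : StableRat 1 := fun z hz => by simp at hz

theorem eventually_stabilizes_C {n d : ℝ[X]} {c : ℝ} (hnd : n.degree < d.degree)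
    (hd : ∀ z : ℂ, (d.map (algebraMap ℝ ℂ)).eval z = 0 → z.re ≠ 0) (hodd : Odd (orhpCount d))
    (hc : OmegaStable (d - C c * n) 0) :
    ∀ᶠ ε in 𝓝[>] (0 : ℝ), Stabilizes (C ((1 + ε) * c)) 1 n d := by
  obtain ⟨h, hdh, hh⟩ := hc.exists_eq_X_mul
  have hd0 : d.eval 0 = c * n.eval 0 := by
    simpa [sub_eq_zero] using congrArg (eval (0 : ℝ)) hdh
  have hc0 : c ≠ 0 := by
    rintro rfl
    exact eval_zero_ne_zero_of_re_ne_zero hd (by simpa using hd0)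
  have hcn : (C c * n).degree < d.degree := by rwa [degree_C_mul hc0]
  have hdeg : (X * h).degree = d.degree := by rw [← hdh, degree_sub_eq_left_of_degree_lt hcn]
  have hlc : h.leadingCoeff = d.leadingCoeff := by
    rw [← leadingCoeff_sub_of_degree_lt hcn, hdh, leadingCoeff_mul, leadingCoeff_X, one_mul]
  have hsign : (C c * n).eval 0 * h.eval 0 < 0 := by
    have hsigns := mul_neg_of_neg_of_pos (eval_zero_mul_leadingCoeff_neg_of_odd hd hodd)
      (eval_zero_mul_leadingCoeff_pos_of_stableRat hh)
    rw [hlc] at hsigns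
    rw [eval_mul, eval_C, ← hd0]
    exact neg_of_mul_neg_left (by linarith) (mul_self_nonneg d.leadingCoeff)
  filter_upwards [eventually_stableRat_X_mul_sub hh (hdeg ▸ hcn.le) hsign] with ε hε
  refine ⟨one_ne_zero, isCoprime_one_right, degree_one (R := ℝ) ▸ degree_C_le, stableRat_one, ?_⟩
  rwa [show 1 * d - C ((1 + ε) * c) * n = X * h - C ε * (C c * n) by
    rw [← hdh, C_mul, C_add, C_1]; ring]

theorem RIR_le_of_omegaStable {n d : ℝ[X]} {c : ℝ} (hnd : n.degree < d.degree)
    (hd : ∀ z : ℂ, (d.map (algebraMap ℝ ℂ)).eval z = 0 → z.re ≠ 0) (hodd : Odd (orhpCount d))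
    (hc : OmegaStable (d - C c * n) 0) : RIR n d ≤ ENNReal.ofReal |c| := by
  have hlim : Tendsto (fun ε : ℝ => ENNReal.ofReal |(1 + ε) * c|) (𝓝[>] 0)
      (𝓝 (ENNReal.ofReal |c|)) :=
    ENNReal.tendsto_ofReal <| (((continuous_const.add continuous_id).mul
      continuous_const).abs.tendsto' 0 _ (by simp)).mono_left nhdsWithin_le_nhds
  refine ge_of_tendsto hlim ((eventually_stabilizes_C hnd hd hodd hc).mono fun ε hε => ?_)
  exact sInf_le ⟨_, _, hε, by rw [hinfNorm_C_one]⟩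

theorem stmt5_general (n d : Polynomial ℝ)
    (hsp : n.degree < d.degree)
    (hnoimag : ∀ ω : ℝ, (d.map (algebraMap ℝ ℂ)).eval ((ω : ℂ) * Complex.I) ≠ 0)
    (hodd : Odd (orhpCount d))
    (hstab0 : OmegaStable (d - Polynomial.C (1 / (n.eval 0 / d.eval 0)) * n) 0) :
    RIR n d = ENNReal.ofReal (1 / |n.eval 0 / d.eval 0|) := by
  have hd := fun z => re_ne_zero_of_eval_eq_zero (z := z) hnoimag
  have hc : 1 / |n.eval 0 / d.eval 0| = |d.eval 0 / n.eval 0| := by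
    rw [one_div, ← abs_inv, inv_div]
  rw [hc]
  refine le_antisymm ?_ (le_sInf ?_)
  · simpa [one_div_div] using RIR_le_of_omegaStable hsp hd hodd hstab0
  · rintro _ ⟨b, a, hst, rfl⟩
    exact ENNReal.ofReal_le_ofReal (abs_div_le_hinfNorm_of_stabilizes hst hsp hd hodd)

/-- if `g` is strictly proper with no imaginary-axis poles, an odd number
of ORHP poles, `g(0) ≠ 0`, and the constant perturbation `δ₀ = 1/g(0)` achieves
`0`-stability (char. polynomial `d − (1/g(0)) n`), then `ρ*(g) = 1/|g(0)|`. -/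
theorem stmt5 (n d : Polynomial ℝ) (hd : d ≠ 0) (hcop : IsCoprime n d)
    (hsp : n.degree < d.degree)
    (hnoimag : ∀ ω : ℝ, (d.map (algebraMap ℝ ℂ)).eval ((ω : ℂ) * Complex.I) ≠ 0)
    (hodd : Odd (orhpCount d))
    (hg0 : n.eval 0 / d.eval 0 ≠ 0)
    (hstab0 : OmegaStable (d - Polynomial.C (1 / (n.eval 0 / d.eval 0)) * n) 0) :
    RIR n d = ENNReal.ofReal (1 / |n.eval 0 / d.eval 0|) :=
  stmt5_general n d hsp hnoimag hodd hstab0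
end

section
/- Let p > 0, ℓ > 0, and q be real numbers. The real cubic polynomial s³ + ps² + qs + ℓ has exactly two roots (counted with multiplicity) with positive real part and no roots on the imaginary axis if and only if ℓ > pq. -/
open Polynomial

/-- Numerator `ζs − k` of the third order transfer function. -/
noncomputable def numer3 (ζ k : ℝ) : Polynomial ℝ :=
  Polynomial.C ζ * Polynomial.X - Polynomial.C k

/-- Denominator `s³ + ps² + qs + ℓ` of the third order transfer function. -/
noncomputable def denom3 (p q ℓ : ℝ) : Polynomial ℝ :=
  Polynomial.X ^ 3 + Polynomial.C p * Polynomial.X ^ 2 + Polynomial.C q * Polynomial.X +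
    Polynomial.C ℓ


/-! Over a real root `r` the cubic factors as `(s - r) (s² + (p + r) s + (r² + p r + q))`, and
`ℓ > 0` forces `r ≠ 0` with `r (r² + p r + q) = -ℓ`. The Hurwitz gap factors as
`ℓ - p q = -(p + r) (r² + q)`. If `r > 0`, the quadratic factor has negative constant term, hence
one root in each open half-plane: two roots with positive real part, and `ℓ > p q`. If `r < 0`,
its constant term is positive, so its roots are real of equal sign or a conjugate pair; either way
both lie in the right half-plane exactly when their sum `-(p + r)` is positive, i.e. when
`ℓ > p q`. -/

lemma cubic_pos_of_abs_coeff_le (p q ℓ t : ℝ) (ht : 1 + |p| + |q| + |ℓ| ≤ t) :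
    0 < t ^ 3 + p * t ^ 2 + q * t + ℓ := by
  have ht1 : 1 ≤ t := by linarith [abs_nonneg p, abs_nonneg q, abs_nonneg ℓ]
  have ht2 : t ≤ t ^ 2 := by nlinarith
  calc 0 < t ^ 2 * (t - |p| - |q| - |ℓ|) := by nlinarith
    _ ≤ t ^ 3 - |p| * t ^ 2 - |q| * t - |ℓ| := by
        nlinarith [mul_le_mul_of_nonneg_left ht2 (abs_nonneg q),
          mul_le_mul_of_nonneg_left (ht1.trans ht2) (abs_nonneg ℓ)]
    _ ≤ t ^ 3 + p * t ^ 2 + q * t + ℓ := by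
        nlinarith [neg_abs_le p, neg_abs_le q, neg_abs_le ℓ]

lemma exists_cubic_eq_zero (p q ℓ : ℝ) : ∃ r : ℝ, r ^ 3 + p * r ^ 2 + q * r + ℓ = 0 := by
  have ht := add_nonneg (add_nonneg (abs_nonneg p) (abs_nonneg q)) (abs_nonneg ℓ)
  set t := 1 + |p| + |q| + |ℓ|
  have h_top := cubic_pos_of_abs_coeff_le p q ℓ t le_rfl
  have h_bot := cubic_pos_of_abs_coeff_le (-p) q (-ℓ) t (by rw [abs_neg, abs_neg])
  have hzero : (0 : ℝ) ∈ Set.Icc ((-t) ^ 3 + p * (-t) ^ 2 + q * (-t) + ℓ)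
      (t ^ 3 + p * t ^ 2 + q * t + ℓ) := ⟨by linarith, h_top.le⟩
  obtain ⟨r, -, hr⟩ := intermediate_value_Icc (by linarith : -t ≤ t)
    (by fun_prop : Continuous fun x : ℝ => x ^ 3 + p * x ^ 2 + q * x + ℓ).continuousOn hzero
  exact ⟨r, hr⟩

lemma exists_add_eq_and_mul_eq {k : Type*} [Field k] [IsAlgClosed k] [NeZero (2 : k)]
    (σ π : k) : ∃ b c : k, b + c = σ ∧ b * c = π := by
  obtain ⟨s, hs⟩ := IsAlgClosed.exists_eq_mul_self (σ ^ 2 - 4 * π)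
  refine ⟨(σ + s) / 2, (σ - s) / 2, by field_simp; ring, ?_⟩
  field_simp
  linear_combination hs

lemma orhpCount_eq_card_filter {f : ℝ[X]} {s : Multiset ℂ}
    (hf : f.map (algebraMap ℝ ℂ) = (s.map fun a => X - C a).prod) :
    orhpCount f = Multiset.card (s.filter fun z => 0 < z.re) := by
  rw [orhpCount, hf, roots_multiset_prod_X_sub_C]

lemma eval_map_eq_zero_iff_mem {f : ℝ[X]} {s : Multiset ℂ}
    (hf : f.map (algebraMap ℝ ℂ) = (s.map fun a => X - C a).prod) (z : ℂ) :
    (f.map (algebraMap ℝ ℂ)).eval z = 0 ↔ z ∈ s := by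
  have hne : (s.map fun a => X - C a).prod ≠ 0 :=
    (monic_multiset_prod_of_monic _ _ fun a _ => monic_X_sub_C a).ne_zero
  rw [hf, ← IsRoot.def, ← mem_roots hne, roots_multiset_prod_X_sub_C]

lemma map_denom3_eq_prod {p q ℓ r : ℝ} {b c : ℂ} (hr : r ^ 3 + p * r ^ 2 + q * r + ℓ = 0)
    (hsum : b + c = ((-(p + r) : ℝ) : ℂ)) (hprod : b * c = ((r ^ 2 + p * r + q : ℝ) : ℂ)) :
    (denom3 p q ℓ).map (algebraMap ℝ ℂ) =
      (({(r : ℂ), b, c} : Multiset ℂ).map fun a => X - C a).prod := by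
  push_cast at hsum hprod
  have hrC : (r : ℂ) ^ 3 + p * r ^ 2 + q * r + ℓ = 0 := by exact_mod_cast hr
  have hp : (p : ℂ) = -(r + b + c) := by linear_combination hsum
  have hq : (q : ℂ) = r * b + r * c + b * c := by linear_combination -hprod - r * hsum
  have hℓ : (ℓ : ℂ) = -(r * b * c) := by linear_combination hrC + r * hprod
  simp only [denom3, Polynomial.map_add, Polynomial.map_pow, Polynomial.map_mul, map_X, map_C,
    Complex.coe_algebraMap, hp, hq, hℓ, map_neg, map_add, map_mul, Multiset.insert_eq_cons,
    Multiset.map_cons, Multiset.map_singleton, Multiset.prod_cons, Multiset.prod_singleton]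
  ring

/-- `b` and `c` are either both real or complex conjugates. -/
lemma Complex.re_mul_re_eq_or_of_im_eq_zero {b c : ℂ} (hsum : (b + c).im = 0)
    (hprod : (b * c).im = 0) :
    b.re * c.re = (b * c).re ∨ (b.re = c.re ∧ b.re * c.re < (b * c).re) := by
  simp only [Complex.add_im, Complex.mul_im, Complex.mul_re] at hsum hprod ⊢
  have hc : c.im = -b.im := by linarith
  rw [hc] at hprod ⊢
  by_cases hb : b.im = 0
  · left
    simp [hb]
  · right
    have hre : b.re = c.re := by
      have : b.im * (c.re - b.re) = 0 := by linarith
      linarith [(mul_eq_zero.1 this).resolve_left hb]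
    exact ⟨hre, by nlinarith [sq_pos_of_ne_zero hb]⟩

lemma Complex.re_mul_re_neg_of_mul_neg {b c : ℂ} {π : ℝ} (hsum : (b + c).im = 0)
    (hprod : b * c = π) (hπ : π < 0) : b.re * c.re < 0 := by
  have hprod_im : (b * c).im = 0 := by simp [hprod]
  rcases Complex.re_mul_re_eq_or_of_im_eq_zero hsum hprod_im with h | ⟨hre, h⟩ <;>
    rw [hprod, Complex.ofReal_re] at h
  · linarith
  · nlinarith [mul_self_nonneg b.re]

lemma Complex.re_pos_and_re_pos_iff {b c : ℂ} {σ π : ℝ} (hsum : b + c = σ) (hprod : b * c = π)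
    (hπ : 0 < π) : 0 < b.re ∧ 0 < c.re ↔ 0 < σ := by
  have hsum_im : (b + c).im = 0 := by simp [hsum]
  have hsum_re : b.re + c.re = σ := by simpa using congrArg Complex.re hsum
  have hprod_im : (b * c).im = 0 := by simp [hprod]
  rw [← hsum_re]
  rcases Complex.re_mul_re_eq_or_of_im_eq_zero hsum_im hprod_im with h | ⟨hre, -⟩
  · rw [hprod, Complex.ofReal_re] at h
    constructor
    · rintro ⟨hb, hc⟩; linarith
    · intro hpos
      constructor <;> by_contra! hnonpos <;> nlinarith
  · rw [← hre]
    constructor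
    · rintro ⟨hb, -⟩; linarith
    · intro hpos; exact ⟨by linarith, by linarith⟩

/-- for `p > 0`, `ℓ > 0`, the cubic `s³ + ps² + qs + ℓ` has exactly two
roots (with multiplicity) in the ORHP and none on the imaginary axis iff `ℓ > pq`. -/
theorem stmt9 (p q ℓ : ℝ) (hp : 0 < p) (hℓ : 0 < ℓ) :
    (orhpCount (denom3 p q ℓ) = 2 ∧
      ∀ z : ℂ, ((denom3 p q ℓ).map (algebraMap ℝ ℂ)).eval z = 0 → z.re ≠ 0)
    ↔ p * q < ℓ := by
  obtain ⟨r, hr⟩ := exists_cubic_eq_zero p q ℓ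
  obtain ⟨b, c, hsum, hprod⟩ :=
    exists_add_eq_and_mul_eq ((-(p + r) : ℝ) : ℂ) ((r ^ 2 + p * r + q : ℝ) : ℂ)
  have hfac := map_denom3_eq_prod hr hsum hprod
  simp only [orhpCount_eq_card_filter hfac, eval_map_eq_zero_iff_mem hfac,
    ← Multiset.countP_eq_card_filter, ← Multiset.cons_zero, Multiset.insert_eq_cons,
    Multiset.countP_cons, Multiset.countP_zero, zero_add, Complex.ofReal_re, Multiset.mem_cons,
    Multiset.notMem_zero, or_false, ne_eq, forall_eq_or_imp, forall_eq]
  have hgap : ℓ - p * q = -(p + r) * (r ^ 2 + q) := by linear_combination hr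
  have hr0 : r ≠ 0 := by rintro rfl; linarith
  rcases hr0.lt_or_gt with hr_neg | hr_pos
  · have hπ : 0 < r ^ 2 + p * r + q := by nlinarith
    have hgap_pos : p * q < ℓ ↔ 0 < -(p + r) := by
      rw [← sub_pos, hgap]; exact mul_pos_iff_of_pos_right (by nlinarith)
    rw [if_neg hr_neg.not_gt, hgap_pos, ← Complex.re_pos_and_re_pos_iff hsum hprod hπ]
    split_ifs <;> simp [*, ne_of_gt]
  · have hπ : r ^ 2 + p * r + q < 0 := by nlinarith
    have hgap_pos : p * q < ℓ := by
      rw [← sub_pos, hgap]; exact mul_pos_of_neg_of_neg (by linarith) (by nlinarith)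
    simp only [hgap_pos, iff_true, if_pos hr_pos]
    rcases mul_neg_iff.1 (Complex.re_mul_re_neg_of_mul_neg (by simp [hsum]) hprod hπ) with
      ⟨hb, hc⟩ | ⟨hb, hc⟩
    · simp [hb, hc.le, hb.ne', hc.ne, hr0]
    · simp [hb.le, hc, hb.ne, hc.ne', hr0]
end

section
/- Let g(s) = (ζs − k)/(s³ + ps² + qs + ℓ) with real parameters ζ, k, p, q, ℓ, where k ≠ 0, ℓ ≠ 0, the numerator and denominator are coprime, the denominator has no roots on the imaginary axis, and q² < 2pℓ. Then sup_{ω∈ℝ} |g(iω)| is attained at some frequency ω_p with ω_p ≠ 0, and |g(iω_p)| > |g(0)|. -/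
open Polynomial

/-!
On the imaginary axis `|g(iω)|² = N(ω) / D(ω)` with `N = ζ²ω² + k²` and
`D = ω⁶ + (p² − 2q)ω⁴ + (q² − 2pℓ)ω² + ℓ²`. Since `D > 0` (no imaginary-axis poles) and
`deg N < deg D`, this is continuous and tends to `0` at `±∞`, so it attains its supremum.
Moreover `N(ω)D(0) − N(0)D(ω) = ω² (ζ²ℓ² + k²(2pℓ − q²) + O(ω²))`, and the bracket is positive
at `0` because `k ≠ 0` and `q² < 2pℓ`; hence the gain at small `ω ≠ 0` exceeds the DC gain
`|g(0)|`, and the maximiser cannot be `0`.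
-/

open Filter Topology Complex

theorem Polynomial.div_tendsto_cocompact_zero_of_degree_lt {P Q : ℝ[X]}
    (hdeg : P.degree < Q.degree) :
    Tendsto (fun x => P.eval x / Q.eval x) (cocompact ℝ) (𝓝 0) := by
  rw [cocompact_eq_atBot_atTop]
  refine Tendsto.sup ?_ (div_tendsto_atTop_zero_of_degree_lt P Q hdeg)
  have h := (div_tendsto_atTop_zero_of_degree_lt (P.comp (-X)) (Q.comp (-X))
    (by simpa only [degree_comp_neg_X] using hdeg)).comp tendsto_neg_atBot_atTop
  simpa [Function.comp_def] using h

theorem Continuous.exists_forall_ge_of_tendsto_cocompact_zero {X : Type*} [TopologicalSpace X]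
    {f : X → ℝ} (hf : Continuous f) (hlim : Tendsto f (cocompact X) (𝓝 0)) {x₀ : X}
    (hx₀ : 0 < f x₀) : ∃ x, ∀ y, f y ≤ f x :=
  hf.exists_forall_ge' x₀ ((hlim.eventually (eventually_lt_nhds hx₀)).mono fun _ h => h.le)

theorem hinfNorm_eq_of_forall_le {n d : ℝ[X]} {ω₀ : ℝ}
    (h : ∀ ω : ℝ, ‖ratEval n d (ω * I)‖ ≤ ‖ratEval n d (ω₀ * I)‖) :
    hinfNorm n d = ‖ratEval n d (ω₀ * I)‖ :=
  le_antisymm (ciSup_le h) (le_ciSup ⟨_, Set.forall_mem_range.2 h⟩ ω₀)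

noncomputable def gainNum (ζ k : ℝ) : ℝ[X] :=
  C (ζ ^ 2) * X ^ 2 + C (k ^ 2)

noncomputable def gainDen (p q ℓ : ℝ) : ℝ[X] :=
  X ^ 6 + C (p ^ 2 - 2 * q) * X ^ 4 + C (q ^ 2 - 2 * p * ℓ) * X ^ 2 + C (ℓ ^ 2)

theorem normSq_eval_numer3 (ζ k ω : ℝ) :
    normSq (((numer3 ζ k).map (algebraMap ℝ ℂ)).eval (ω * I)) = (gainNum ζ k).eval ω := by
  have h : ((numer3 ζ k).map (algebraMap ℝ ℂ)).eval (ω * I) = (-k : ℝ) + (ζ * ω : ℝ) * I := by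
    simp only [numer3, Polynomial.map_sub, Polynomial.map_mul, map_C, map_X, coe_algebraMap,
      eval_sub, eval_mul, eval_C, eval_X]
    push_cast
    ring
  rw [h, normSq_add_mul_I]
  simp only [gainNum, eval_add, eval_mul, eval_pow, eval_C, eval_X]
  ring

theorem normSq_eval_denom3 (p q ℓ ω : ℝ) :
    normSq (((denom3 p q ℓ).map (algebraMap ℝ ℂ)).eval (ω * I)) = (gainDen p q ℓ).eval ω := by
  have h : ((denom3 p q ℓ).map (algebraMap ℝ ℂ)).eval (ω * I) =
      (ℓ - p * ω ^ 2 : ℝ) + (q * ω - ω ^ 3 : ℝ) * I := by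
    simp only [denom3, Polynomial.map_add, Polynomial.map_mul, Polynomial.map_pow, map_C, map_X,
      coe_algebraMap, eval_add, eval_mul, eval_pow, eval_C, eval_X]
    push_cast
    ring_nf
    simp only [I_sq, I_pow_three]
    ring
  rw [h, normSq_add_mul_I]
  simp only [gainDen, eval_add, eval_mul, eval_pow, eval_C, eval_X]
  ring

theorem sq_norm_ratEval_numer3_denom3 (ζ k p q ℓ ω : ℝ) :
    ‖ratEval (numer3 ζ k) (denom3 p q ℓ) (ω * I)‖ ^ 2 =
      (gainNum ζ k).eval ω / (gainDen p q ℓ).eval ω := by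
  rw [Complex.sq_norm, ratEval, normSq_div, normSq_eval_numer3, normSq_eval_denom3]

theorem gainDen_eval_pos {p q ℓ : ℝ}
    (hnoimag : ∀ z : ℂ, ((denom3 p q ℓ).map (algebraMap ℝ ℂ)).eval z = 0 → z.re ≠ 0) (ω : ℝ) :
    0 < (gainDen p q ℓ).eval ω := by
  rw [← normSq_eval_denom3]
  exact normSq_pos.2 fun h => hnoimag _ h (by simp)

theorem degree_gainNum_lt_degree_gainDen (ζ k p q ℓ : ℝ) :
    (gainNum ζ k).degree < (gainDen p q ℓ).degree := by
  have hN : (gainNum ζ k).degree ≤ 2 := by unfold gainNum; compute_degree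
  have hD : (gainDen p q ℓ).degree = 6 := by unfold gainDen; compute_degree!
  rw [hD]
  exact hN.trans_lt (by norm_num)

theorem gainNum_mul_gainDen_sub (ζ k p q ℓ ω : ℝ) :
    (gainNum ζ k).eval ω * (gainDen p q ℓ).eval 0 - (gainNum ζ k).eval 0 * (gainDen p q ℓ).eval ω =
      ω ^ 2 * (ζ ^ 2 * ℓ ^ 2 + k ^ 2 * (2 * p * ℓ - q ^ 2) - k ^ 2 * (p ^ 2 - 2 * q) * ω ^ 2 -
        k ^ 2 * ω ^ 4) := by
  simp only [gainNum, gainDen, eval_add, eval_mul, eval_pow, eval_C, eval_X]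
  ring

theorem exists_gain_gt_gain_zero {ζ k p q ℓ : ℝ} (hk : k ≠ 0) (hq : q ^ 2 < 2 * p * ℓ)
    (hD : ∀ ω, 0 < (gainDen p q ℓ).eval ω) :
    ∃ ω : ℝ, (gainNum ζ k).eval 0 / (gainDen p q ℓ).eval 0 <
      (gainNum ζ k).eval ω / (gainDen p q ℓ).eval ω := by
  set b : ℝ → ℝ := fun ω =>
    ζ ^ 2 * ℓ ^ 2 + k ^ 2 * (2 * p * ℓ - q ^ 2) - k ^ 2 * (p ^ 2 - 2 * q) * ω ^ 2 - k ^ 2 * ω ^ 4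
  have hb0 : 0 < b 0 := by
    simp only [b]
    nlinarith [sq_nonneg (ζ * ℓ), pow_two_pos_of_ne_zero hk]
  have hb : Continuous b := by fun_prop
  have hnear : ∀ᶠ ω in 𝓝[≠] (0 : ℝ), 0 < b ω ∧ ω ≠ 0 :=
    ((continuousAt_const.eventually_lt hb.continuousAt hb0).filter_mono nhdsWithin_le_nhds).and
      self_mem_nhdsWithin
  obtain ⟨ω, hbω, hω⟩ := hnear.exists
  refine ⟨ω, (div_lt_div_iff₀ (hD 0) (hD ω)).2 (sub_pos.1 ?_)⟩
  rw [gainNum_mul_gainDen_sub]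
  exact mul_pos (pow_two_pos_of_ne_zero hω) hbω

theorem stmt10_general (ζ k p q ℓ : ℝ) (hk : k ≠ 0)
    (hnoimag : ∀ z : ℂ, ((denom3 p q ℓ).map (algebraMap ℝ ℂ)).eval z = 0 → z.re ≠ 0)
    (hq : q ^ 2 < 2 * p * ℓ) :
    ∃ ωp : ℝ, ωp ≠ 0 ∧
      ‖ratEval (numer3 ζ k) (denom3 p q ℓ) ((ωp : ℂ) * Complex.I)‖ =
        hinfNorm (numer3 ζ k) (denom3 p q ℓ) ∧
      ‖ratEval (numer3 ζ k) (denom3 p q ℓ) 0‖ <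
        ‖ratEval (numer3 ζ k) (denom3 p q ℓ) ((ωp : ℂ) * Complex.I)‖ := by
  set φ : ℝ → ℝ := fun ω => (gainNum ζ k).eval ω / (gainDen p q ℓ).eval ω
  have hD := gainDen_eval_pos hnoimag
  have hnorm (ω : ℝ) : ‖ratEval (numer3 ζ k) (denom3 p q ℓ) (ω * I)‖ = √(φ ω) := by
    rw [← Real.sqrt_sq (norm_nonneg _), sq_norm_ratEval_numer3_denom3]
  have hφ0 : 0 ≤ φ 0 := div_nonneg (normSq_eval_numer3 ζ k 0 ▸ normSq_nonneg _) (hD 0).le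
  obtain ⟨ω₀, hω₀⟩ := exists_gain_gt_gain_zero (ζ := ζ) hk hq hD
  obtain ⟨ωp, hmax⟩ := Continuous.exists_forall_ge_of_tendsto_cocompact_zero
    ((Polynomial.continuous _).div (Polynomial.continuous _) fun ω => (hD ω).ne')
    (div_tendsto_cocompact_zero_of_degree_lt (degree_gainNum_lt_degree_gainDen ζ k p q ℓ))
    (hφ0.trans_lt hω₀)
  have hlt : φ 0 < φ ωp := hω₀.trans_le (hmax ω₀)
  refine ⟨ωp, ?_, (hinfNorm_eq_of_forall_le fun ω => ?_).symm, ?_⟩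
  · rintro rfl
    exact hlt.false
  · rw [hnorm, hnorm]
    exact Real.sqrt_le_sqrt (hmax ω)
  · rw [← zero_mul I, ← ofReal_zero, hnorm, hnorm]
    exact Real.sqrt_lt_sqrt hφ0 hlt

/-- for `g(s) = (ζs − k)/(s³ + ps² + qs + ℓ)` with `k ≠ 0`, `ℓ ≠ 0`, no
imaginary-axis poles and `q² < 2pℓ`, the sup of `|g(iω)|` is attained at some
`ω_p ≠ 0`, and `|g(iω_p)| > |g(0)|`. -/
theorem stmt10 (ζ k p q ℓ : ℝ) (hk : k ≠ 0) (hℓ : ℓ ≠ 0)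
    (hcop : IsCoprime (numer3 ζ k) (denom3 p q ℓ))
    (hnoimag : ∀ z : ℂ, ((denom3 p q ℓ).map (algebraMap ℝ ℂ)).eval z = 0 → z.re ≠ 0)
    (hq : q ^ 2 < 2 * p * ℓ) :
    ∃ ωp : ℝ, ωp ≠ 0 ∧
      ‖ratEval (numer3 ζ k) (denom3 p q ℓ) ((ωp : ℂ) * Complex.I)‖ =
        hinfNorm (numer3 ζ k) (denom3 p q ℓ) ∧
      ‖ratEval (numer3 ζ k) (denom3 p q ℓ) 0‖ <
        ‖ratEval (numer3 ζ k) (denom3 p q ℓ) ((ωp : ℂ) * Complex.I)‖ :=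
  stmt10_general ζ k p q ℓ hk hnoimag hq
end

section
/- Let γ ∈ ℝ and let ℓ(s) = n_ℓ(s)/d_ℓ(s) (coprime real polynomials) be a strictly proper real rational function with an even number (counted with multiplicity) of poles with positive real part and no poles on the imaginary axis. Suppose every root of d_ℓ(s) − n_ℓ(s) has negative real part, |γ| < 1, and sup_{ω∈ℝ} |γ ℓ(iω)| < 1. Then there exists ξ₀ > 0 such that for every ξ ∈ (0, ξ₀), every root of the polynomial (s + ξ)d_ℓ(s) − (s + ξγ)n_ℓ(s) — the characteristic polynomial of 1 = f(s)ℓ(s) with the high-pass filter f(s) := (s + ξγ)/(s + ξ) — has negative real part. -/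
open Polynomial

/-!
The characteristic polynomial is `X * q + ξ * r` with `q = d - n` Hurwitz stable and
`r = d - γ n`. Since `deg r ≤ deg q` and `q` has no roots in the closed right half plane,
`‖r‖ ≤ K ‖q‖` there, so a root `z` with `0 ≤ re z` satisfies `‖z‖ ≤ K ξ`. Near `0` the root
equation reads `q(0) z + r(0) ξ = O(ξ²)`; when `q(0)` and `r(0)` have the same sign the real
part of the left side is at least `|r(0)| ξ`, which is impossible for small `ξ`.
The signs agree: `q(0)` and `d(0)` both have the sign of the common leading coefficient,
because `q` and `d` have an even number of roots in the right half plane and none on the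
imaginary axis, while the small-gain condition at `ω = 0`, `|γ n(0)| < |d(0)|`, gives
`r(0) = d(0) - γ n(0)` the sign of `d(0)`.
-/

namespace Polynomial

theorem norm_eval_eq_norm_leadingCoeff_mul_prod_roots (P : ℂ[X]) (z : ℂ) :
    ‖P.eval z‖ = ‖P.leadingCoeff‖ * (P.roots.map fun r => ‖z - r‖).prod := by
  rw [(IsAlgClosed.splits P).eval_eq_prod_roots, norm_mul]
  exact congrArg _ ((map_multiset_prod (normHom : ℂ →*₀ ℝ) _).trans (by rw [Multiset.map_map]; rfl))

theorem exists_norm_eval_le_mul_one_add_norm_pow {𝕜 : Type*} [NormedField 𝕜] (P : 𝕜[X])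
    {m : ℕ} (hm : P.natDegree ≤ m) : ∃ C, 0 ≤ C ∧ ∀ z : 𝕜, ‖P.eval z‖ ≤ C * (1 + ‖z‖) ^ m := by
  refine ⟨∑ i ∈ Finset.range (P.natDegree + 1), ‖P.coeff i‖, by positivity, fun z => ?_⟩
  rw [eval_eq_sum_range, Finset.sum_mul]
  refine (norm_sum_le _ _).trans (Finset.sum_le_sum fun i hi => ?_)
  rw [norm_mul, norm_pow]
  gcongr
  calc ‖z‖ ^ i ≤ (1 + ‖z‖) ^ i := by gcongr; linarith
    _ ≤ (1 + ‖z‖) ^ m :=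
      pow_le_pow_right₀ (by simp) (by have := Finset.mem_range.1 hi; omega)

theorem exists_norm_eval_sub_eval_zero_le {𝕜 : Type*} [NormedField 𝕜] (P : 𝕜[X]) :
    ∃ M, 0 ≤ M ∧ ∀ z : 𝕜, ‖z‖ ≤ 1 → ‖P.eval z - P.eval 0‖ ≤ M * ‖z‖ := by
  obtain ⟨C, hC, hbound⟩ := exists_norm_eval_le_mul_one_add_norm_pow P.divX le_rfl
  refine ⟨C * 2 ^ P.divX.natDegree, by positivity, fun z hz => ?_⟩
  have hsplit : P.eval z - P.eval 0 = z * P.divX.eval z := by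
    conv_lhs => rw [← X_mul_divX_add P]
    simp [coeff_zero_eq_eval_zero]
  rw [hsplit, norm_mul, mul_comm]
  gcongr
  exact (hbound z).trans (by gcongr; linarith)

theorem div_mul_one_add_norm_le_norm_sub {z r : ℂ} {δ : ℝ} (hδ : 0 ≤ δ) (h : δ ≤ ‖z - r‖) :
    δ / (1 + ‖r‖ + δ) * (1 + ‖z‖) ≤ ‖z - r‖ := by
  rw [div_mul_eq_mul_div, div_le_iff₀ (by positivity)]
  nlinarith [norm_sub_norm_le z r, norm_nonneg r]

theorem exists_pos_mul_one_add_norm_pow_le_norm_eval {P : ℂ[X]} (hP : P ≠ 0) {S : Set ℂ}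
    (hS : IsClosed S) (hroots : ∀ r ∈ P.roots, r ∉ S) :
    ∃ c > 0, ∀ z ∈ S, c * (1 + ‖z‖) ^ P.natDegree ≤ ‖P.eval z‖ := by
  rcases S.eq_empty_or_nonempty with rfl | hne
  · exact ⟨1, one_pos, by simp⟩
  have hδ : ∀ r ∈ P.roots, 0 < Metric.infDist r S := fun r hr =>
    (hS.notMem_iff_infDist_pos hne).1 (hroots r hr)
  set c : ℂ → ℝ := fun r => Metric.infDist r S / (1 + ‖r‖ + Metric.infDist r S)
  refine ⟨‖P.leadingCoeff‖ * (P.roots.map c).prod, ?_, fun z hz => ?_⟩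
  · refine mul_pos (norm_pos_iff.2 (leadingCoeff_ne_zero.2 hP)) (Multiset.prod_pos fun x hx => ?_)
    obtain ⟨r, hr, rfl⟩ := Multiset.mem_map.1 hx
    have := hδ r hr
    positivity
  have hroot : ∀ r ∈ P.roots, c r * (1 + ‖z‖) ≤ ‖z - r‖ := fun r hr =>
    div_mul_one_add_norm_le_norm_sub Metric.infDist_nonneg
      (by rw [← dist_eq_norm, dist_comm]; exact Metric.infDist_le_dist_of_mem hz)
  have hprod := Multiset.prod_map_le_prod_map₀ _ _
    (fun r hr => by have := hδ r hr; positivity) hroot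
  rw [Multiset.prod_map_mul, Multiset.map_const', Multiset.prod_replicate,
    ← (IsAlgClosed.splits P).natDegree_eq_card_roots] at hprod
  rw [norm_eval_eq_norm_leadingCoeff_mul_prod_roots, mul_assoc]
  gcongr

theorem exists_norm_eval_le_mul_norm_eval {N D : ℂ[X]} (hD : D ≠ 0)
    (hdeg : N.natDegree ≤ D.natDegree) {S : Set ℂ} (hS : IsClosed S)
    (hroots : ∀ r ∈ D.roots, r ∉ S) :
    ∃ K, 0 ≤ K ∧ ∀ z ∈ S, ‖N.eval z‖ ≤ K * ‖D.eval z‖ := by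
  obtain ⟨C, hC, hupper⟩ := exists_norm_eval_le_mul_one_add_norm_pow N hdeg
  obtain ⟨c, hc, hlower⟩ := exists_pos_mul_one_add_norm_pow_le_norm_eval hD hS hroots
  refine ⟨C / c, by positivity, fun z hz => ?_⟩
  calc ‖N.eval z‖ ≤ C / c * (c * (1 + ‖z‖) ^ D.natDegree) := by
        rw [← mul_assoc, div_mul_cancel₀ _ hc.ne']; exact hupper z
    _ ≤ C / c * ‖D.eval z‖ := by gcongr; exact hlower z hz

theorem re_ne_zero_of_mem_roots {P : ℂ[X]} (h : ∀ ω : ℝ, P.eval ((ω : ℂ) * Complex.I) ≠ 0)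
    {z : ℂ} (hz : z ∈ P.roots) : z.re ≠ 0 := fun hre => h z.im <| by
  rw [← (mem_roots'.1 hz).2]
  congr 1
  apply Complex.ext <;> simp [hre]

end Polynomial

theorem Multiset.prod_pos_iff_even_card_filter_neg {R : Type*} [CommRing R] [LinearOrder R]
    [IsStrictOrderedRing R] {s : Multiset R} (hs : ∀ x ∈ s, x ≠ 0) :
    0 < s.prod ↔ Even (card (s.filter (· < 0))) := by
  induction s using Multiset.induction_on with
  | empty => simp
  | cons a s ih =>
    have ha : a ≠ 0 := hs a (Multiset.mem_cons_self a s)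
    have hprod : s.prod ≠ 0 :=
      Multiset.prod_ne_zero fun h => hs 0 (Multiset.mem_cons_of_mem h) rfl
    rw [Multiset.prod_cons]
    rcases ha.lt_or_gt with ha | ha
    · rw [Multiset.filter_cons_of_pos (p := (· < 0)) _ ha, Multiset.card_cons, Nat.even_add_one,
        ← ih fun x hx => hs x (Multiset.mem_cons_of_mem hx)]
      exact ⟨fun h => (neg_of_mul_pos_right h ha.le).not_gt,
        fun h => mul_pos_of_neg_of_neg ha (lt_of_le_of_ne (not_lt.1 h) hprod)⟩
    · rw [Multiset.filter_cons_of_neg (p := (· < 0)) _ ha.not_gt, mul_pos_iff_of_pos_left ha,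
        ih fun x hx => hs x (Multiset.mem_cons_of_mem hx)]

theorem pos_iff_pos_of_continuous_of_ne_zero {f : ℝ → ℝ} (hf : Continuous f)
    (h0 : ∀ t, f t ≠ 0) (a b : ℝ) : 0 < f a ↔ 0 < f b := by
  suffices key : ∀ a b, 0 < f a → 0 < f b from ⟨key a b, key b a⟩
  intro a b ha
  by_contra! hb
  obtain ⟨t, ht⟩ := intermediate_value_univ b a hf ⟨hb, ha.le⟩
  exact h0 t ht

open ComplexConjugate in
/-- Moving every element vertically onto the real axis keeps the product real and nonzero, so
its sign is that of the product of the real parts. -/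
theorem Complex.re_multiset_prod_pos_iff {s : Multiset ℂ} (hconj : s.map conj = s)
    (hre : ∀ z ∈ s, z.re ≠ 0) :
    0 < s.prod.re ↔ Even (Multiset.card (s.filter (·.re < 0))) := by
  set F : ℝ → ℂ := fun t => (s.map fun z => (z.re : ℂ) + t * z.im * Complex.I).prod
  have hF_im : ∀ t, (F t).im = 0 := by
    intro t
    refine Complex.conj_eq_iff_im.1 ?_
    simp only [F, map_multiset_prod, Multiset.map_map]
    nth_rewrite 2 [← hconj]
    rw [Multiset.map_map]
    congr 2
    ext z
    simp
  have hF_re : ∀ t, (F t).re ≠ 0 := by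
    intro t h
    refine Multiset.prod_ne_zero (fun hmem => ?_) (Complex.ext h (hF_im t))
    obtain ⟨z, hz, hz0⟩ := Multiset.mem_map.1 hmem
    exact hre z hz (by simpa using congrArg Complex.re hz0)
  have hcont : Continuous fun t => (F t).re :=
    Complex.continuous_re.comp (continuous_multiset_prod _ fun z _ => by fun_prop)
  have hF1 : F 1 = s.prod := by simp [F]
  have hF0 : (F 0).re = (s.map Complex.re).prod := by
    simp only [F, Complex.ofReal_zero, zero_mul, add_zero]
    have : s.map (fun z => (z.re : ℂ)) = (s.map Complex.re).map Complex.ofRealHom := by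
      rw [Multiset.map_map]; rfl
    rw [this, ← map_multiset_prod]
    rfl
  have hre' : ∀ x ∈ s.map Complex.re, x ≠ 0 := by
    simpa using hre
  rw [← hF1, pos_iff_pos_of_continuous_of_ne_zero hcont hF_re 1 0, hF0,
    Multiset.prod_pos_iff_even_card_filter_neg hre', Multiset.filter_map, Multiset.card_map]
  rfl

open ComplexConjugate in
theorem Polynomial.eval_zero_mul_leadingCoeff_pos {p : ℝ[X]} (hp : p ≠ 0)
    (hre : ∀ z ∈ (p.map (algebraMap ℝ ℂ)).roots, z.re ≠ 0)
    (heven : Even (Multiset.card ((p.map (algebraMap ℝ ℂ)).roots.filter (0 < ·.re)))) :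
    0 < p.eval 0 * p.leadingCoeff := by
  set P := p.map (algebraMap ℝ ℂ)
  set T := P.roots.map Neg.neg
  have hP_conj : P.roots.map conj = P.roots := by
    rw [← (IsAlgClosed.splits P).roots_map, Polynomial.map_map]
    congr 2
    ext; simp
  have hT_conj : T.map conj = T := by
    simp only [T, Multiset.map_map]
    nth_rewrite 2 [← hP_conj]
    rw [Multiset.map_map]
    congr 1
  have hT_re : ∀ z ∈ T, z.re ≠ 0 := by
    simp only [T, Multiset.forall_mem_map_iff, Complex.neg_re, neg_ne_zero]
    exact hre
  have hT_card : Multiset.card (T.filter (·.re < 0)) =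
      Multiset.card (P.roots.filter (0 < ·.re)) := by
    simp [T, Multiset.filter_map]
  have hT_pos : 0 < T.prod.re :=
    (Complex.re_multiset_prod_pos_iff hT_conj hT_re).2 (hT_card ▸ heven)
  have heval : p.eval 0 = p.leadingCoeff * T.prod.re := by
    have := (IsAlgClosed.splits P).eval_eq_prod_roots 0
    rw [eval_zero_map, leadingCoeff_map] at this
    simpa [T] using congrArg Complex.re this
  have hlc : p.leadingCoeff ≠ 0 := leadingCoeff_ne_zero.2 hp
  rw [heval]
  nlinarith [sq_pos_of_ne_zero hlc]

theorem StableRat.ne_zero {q : ℝ[X]} (hq : StableRat q) : q ≠ 0 := by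
  rintro rfl
  simpa using hq 0 (by simp)

theorem StableRat.eval_zero_mul_leadingCoeff_pos {q : ℝ[X]} (hq : StableRat q) :
    0 < q.eval 0 * q.leadingCoeff := by
  refine Polynomial.eval_zero_mul_leadingCoeff_pos hq.ne_zero
    (fun z hz => (hq z (mem_roots'.1 hz).2).ne) ?_
  rw [Multiset.filter_eq_nil.2 fun z hz => (hq z (mem_roots'.1 hz).2).not_gt]
  exact Even.zero

theorem abs_mul_le_norm_mul_add_mul {a b ξ : ℝ} {z : ℂ} (hab : 0 < a * b) (hz : 0 ≤ z.re) :
    |b| * ξ ≤ ‖(a : ℂ) * z + b * ξ‖ := by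
  calc |b| * ξ ≤ |a * z.re + b * ξ| := by
        rcases mul_pos_iff.1 hab with ⟨ha, hb⟩ | ⟨ha, hb⟩
        · rw [abs_of_pos hb]
          exact (le_add_of_nonneg_left (mul_nonneg ha.le hz)).trans (le_abs_self _)
        · rw [abs_of_neg hb]
          exact le_trans (by nlinarith) (neg_le_abs _)
    _ = |((a : ℂ) * z + b * ξ).re| := by simp
    _ ≤ ‖(a : ℂ) * z + b * ξ‖ := Complex.abs_re_le_norm _

theorem StableRat.exists_stableRat_X_mul_add_C_mul {q r : ℝ[X]} (hq : StableRat q)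
    (hdeg : r.natDegree ≤ q.natDegree) (hsign : 0 < q.eval 0 * r.eval 0) :
    ∃ ξ₀ > 0, ∀ ξ : ℝ, 0 < ξ → ξ < ξ₀ → StableRat (X * q + C ξ * r) := by
  set Q := q.map (algebraMap ℝ ℂ)
  set R := r.map (algebraMap ℝ ℂ)
  obtain ⟨K, hK, hRQ⟩ := exists_norm_eval_le_mul_norm_eval (N := R)
    (map_ne_zero hq.ne_zero) (by simpa [Q, R] using hdeg)
    (isClosed_le continuous_const Complex.continuous_re)
    (fun z hz => not_le.2 (hq z (mem_roots'.1 hz).2))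
  obtain ⟨Mq, hMq, hQ⟩ := exists_norm_eval_sub_eval_zero_le Q
  obtain ⟨Mr, hMr, hR⟩ := exists_norm_eval_sub_eval_zero_le R
  set a := q.eval 0
  set b := r.eval 0
  have hb : 0 < |b| := abs_pos.2 (right_ne_zero_of_mul hsign.ne')
  set D := K ^ 2 * Mq + K * Mr
  refine ⟨min (1 / (K + 1)) (|b| / (D + 1)), by positivity, fun ξ hξ hξ₀ z hz => ?_⟩
  by_contra! hre
  have hroot : z * Q.eval z + ξ * R.eval z = 0 := by simpa [Q, R] using hz
  have hz_le : ‖z‖ ≤ ξ * K := by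
    have hQz : 0 < ‖Q.eval z‖ := norm_pos_iff.2 fun h => hre.not_gt (hq z h)
    refine le_of_mul_le_mul_right ?_ hQz
    calc ‖z‖ * ‖Q.eval z‖ = ξ * ‖R.eval z‖ := by
          rw [← norm_mul, eq_neg_of_add_eq_zero_left hroot, norm_neg, norm_mul,
            Complex.norm_real, Real.norm_of_nonneg hξ.le]
      _ ≤ ξ * (K * ‖Q.eval z‖) := by gcongr; exact hRQ z hre
      _ = ξ * K * ‖Q.eval z‖ := by ring
  have hz_one : ‖z‖ ≤ 1 := by
    have : ξ * (K + 1) < 1 := (lt_div_iff₀ (by positivity)).1 (hξ₀.trans_le (min_le_left _ _))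
    nlinarith
  have hupper : ‖(a : ℂ) * z + b * ξ‖ ≤ ξ ^ 2 * D := by
    have hQ0 : Q.eval 0 = a := eval_zero_map _ _
    have hR0 : R.eval 0 = b := eval_zero_map _ _
    calc ‖(a : ℂ) * z + b * ξ‖ = ‖z * (Q.eval z - Q.eval 0) + ξ * (R.eval z - R.eval 0)‖ := by
          rw [hQ0, hR0, ← norm_neg]
          congr 1
          linear_combination -hroot
      _ ≤ ‖z‖ * (Mq * ‖z‖) + ξ * (Mr * ‖z‖) := by
          refine (norm_add_le _ _).trans ?_
          rw [norm_mul, norm_mul, Complex.norm_real, Real.norm_of_nonneg hξ.le]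
          gcongr
          exacts [hQ z hz_one, hR z hz_one]
      _ ≤ (ξ * K) * (Mq * (ξ * K)) + ξ * (Mr * (ξ * K)) := by gcongr
      _ = ξ ^ 2 * D := by ring
  have hlower := abs_mul_le_norm_mul_add_mul (ξ := ξ) hsign hre
  have hbD : |b| ≤ ξ * D := le_of_mul_le_mul_right (by nlinarith) hξ
  have : ξ * (D + 1) < |b| := (lt_div_iff₀ (by positivity)).1 (hξ₀.trans_le (min_le_right _ _))
  nlinarith

/-- `iSup` of a family that is not bounded above is `0`, so the hypothesis only says something
once boundedness is established. -/
theorem abs_mul_eval_zero_lt_of_iSup_lt {γ : ℝ} {n d : ℝ[X]} (hd : d ≠ 0)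
    (hdeg : n.natDegree ≤ d.natDegree)
    (hnoimag : ∀ ω : ℝ, (d.map (algebraMap ℝ ℂ)).eval ((ω : ℂ) * Complex.I) ≠ 0)
    (hsg : (⨆ ω : ℝ, ‖(γ : ℂ) * ratEval n d ((ω : ℂ) * Complex.I)‖) < 1) :
    |γ * n.eval 0| < |d.eval 0| := by
  obtain ⟨K, hK, hnd⟩ := exists_norm_eval_le_mul_norm_eval (N := n.map (algebraMap ℝ ℂ))
    (map_ne_zero hd) (by simpa using hdeg) (isClosed_eq Complex.continuous_re continuous_const)
    (fun _ hz => re_ne_zero_of_mem_roots hnoimag hz)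
  have hbdd : BddAbove (Set.range fun ω : ℝ => ‖(γ : ℂ) * ratEval n d ((ω : ℂ) * Complex.I)‖) := by
    refine ⟨|γ| * K, ?_⟩
    rintro _ ⟨ω, rfl⟩
    simp only [ratEval, norm_mul, norm_div, Complex.norm_real, Real.norm_eq_abs]
    gcongr
    exact div_le_of_le_mul₀ (norm_nonneg _) hK (hnd _ (by simp))
  have hd0 : d.eval 0 ≠ 0 := fun h => hnoimag 0 <| by
    rw [Complex.ofReal_zero, zero_mul, eval_zero_map, h, map_zero]
  have h0 := (le_ciSup hbdd 0).trans_lt hsg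
  simp only [Complex.ofReal_zero, zero_mul, ratEval, eval_zero_map, Complex.coe_algebraMap,
    norm_mul, norm_div, Complex.norm_real] at h0
  rwa [← mul_div_assoc, div_lt_one (norm_pos_iff.2 hd0), ← norm_mul] at h0

theorem mul_sub_pos_of_abs_lt {x y e L : ℝ} (hx : 0 < x * L) (hy : 0 < y * L) (he : |e| < |y|) :
    0 < x * (y - e) := by
  have hxy : 0 < x * y := by
    by_contra! h
    have := mul_pos hx hy
    nlinarith [mul_nonpos_of_nonpos_of_nonneg h (mul_self_nonneg L)]
  have hyy : 0 < y * (y - e) := by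
    have : |y| * |e| < |y| * |y| := mul_lt_mul_of_pos_left he ((abs_nonneg e).trans_lt he)
    nlinarith [abs_mul_abs_self y, le_abs_self (y * e), abs_mul y e]
  have := mul_pos hxy hyy
  nlinarith [mul_self_nonneg y]

theorem stmt15_general (γ : ℝ) (nl dl : Polynomial ℝ)
    (hsp : nl.degree < dl.degree)
    (heven : Even (orhpCount dl))
    (hnoimag : ∀ ω : ℝ, (dl.map (algebraMap ℝ ℂ)).eval ((ω : ℂ) * Complex.I) ≠ 0)
    (hcl : ∀ z : ℂ, ((dl - nl).map (algebraMap ℝ ℂ)).eval z = 0 → z.re < 0)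
    (hsg : (⨆ ω : ℝ, ‖(γ : ℂ) * ratEval nl dl ((ω : ℂ) * Complex.I)‖) < 1) :
    ∃ ξ₀ : ℝ, 0 < ξ₀ ∧ ∀ ξ : ℝ, 0 < ξ → ξ < ξ₀ →
      ∀ z : ℂ, (((Polynomial.X + Polynomial.C ξ) * dl -
          (Polynomial.X + Polynomial.C (ξ * γ)) * nl).map (algebraMap ℝ ℂ)).eval z = 0 →
        z.re < 0 := by
  have hdl : dl ≠ 0 := ne_zero_of_degree_gt hsp
  have hq : StableRat (dl - nl) := hcl
  have hdeg : (dl - C γ * nl).natDegree ≤ (dl - nl).natDegree := by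
    rw [natDegree_eq_of_degree_eq (degree_sub_eq_left_of_degree_lt hsp)]
    exact (natDegree_sub_le _ _).trans
      (max_le le_rfl ((natDegree_C_mul_le _ _).trans (natDegree_le_natDegree hsp.le)))
  have hgain := abs_mul_eval_zero_lt_of_iSup_lt hdl (natDegree_le_natDegree hsp.le) hnoimag hsg
  have hd_sign := eval_zero_mul_leadingCoeff_pos hdl
    (fun _ hz => re_ne_zero_of_mem_roots hnoimag hz) heven
  have hq_sign := hq.eval_zero_mul_leadingCoeff_pos
  rw [leadingCoeff_sub_of_degree_lt hsp] at hq_sign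
  have hsign : 0 < (dl - nl).eval 0 * (dl - C γ * nl).eval 0 := by
    rw [eval_sub (q := C γ * nl), eval_mul, eval_C]
    exact mul_sub_pos_of_abs_lt hq_sign hd_sign hgain
  obtain ⟨ξ₀, hξ₀, hstable⟩ := hq.exists_stableRat_X_mul_add_C_mul hdeg hsign
  refine ⟨ξ₀, hξ₀, fun ξ hξ hξξ₀ => ?_⟩
  have hchar : (X + C ξ) * dl - (X + C (ξ * γ)) * nl = X * (dl - nl) + C ξ * (dl - C γ * nl) := by
    rw [C_mul]; ring
  rw [hchar]
  exact hstable ξ hξ hξξ₀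

/-- static-gain adjustment by a high-pass filter `f(s) = (s+ξγ)/(s+ξ)`:
for sufficiently small `ξ > 0`, all roots of `(s+ξ)d_ℓ(s) − (s+ξγ)n_ℓ(s)` are in
the OLHP. -/
theorem stmt15 (γ : ℝ) (nl dl : Polynomial ℝ) (hdl : dl ≠ 0) (hcop : IsCoprime nl dl)
    (hsp : nl.degree < dl.degree)
    (heven : Even (orhpCount dl))
    (hnoimag : ∀ ω : ℝ, (dl.map (algebraMap ℝ ℂ)).eval ((ω : ℂ) * Complex.I) ≠ 0)
    (hcl : ∀ z : ℂ, ((dl - nl).map (algebraMap ℝ ℂ)).eval z = 0 → z.re < 0)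
    (hγ : |γ| < 1)
    (hsg : (⨆ ω : ℝ, ‖(γ : ℂ) * ratEval nl dl ((ω : ℂ) * Complex.I)‖) < 1) :
    ∃ ξ₀ : ℝ, 0 < ξ₀ ∧ ∀ ξ : ℝ, 0 < ξ → ξ < ξ₀ →
      ∀ z : ℂ, (((Polynomial.X + Polynomial.C ξ) * dl -
          (Polynomial.X + Polynomial.C (ξ * γ)) * nl).map (algebraMap ℝ ℂ)).eval z = 0 →
        z.re < 0 :=
  stmt15_general γ nl dl hsp heven hnoimag hcl hsg
end

section
/- Let α₁, α₂, α₃ > 0 and β₁, β₂, β₃ > 0 be real numbers, and for i = 1, 2, 3 let ψ_i : [0, ∞) → ℝ be continuous, strictly decreasing, and satisfy ψ_i(x) > 0 for all x ≥ 0. Then there exists a unique triple (x₁, x₂, x₃) with x_i > 0 for all i satisfying the equilibrium equations α_i x_i = β_i ψ_i(x_{i−1}) for i = 1, 2, 3, where indices are taken modulo 3 (x₀ := x₃). -/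
/-!
Dividing the `i`-th equation by `α_i` writes an equilibrium as `x₁ = φ₁ x₃`, `x₂ = φ₂ x₁`,
`x₃ = φ₃ x₂` with `φ_i = (β_i / α_i) ψ_i`, so `x₁` is a fixed point of `φ₁ ∘ φ₃ ∘ φ₂`, a composite of
an odd number of decreasing maps, hence decreasing. A continuous decreasing self-map of `[a, ∞)`
has exactly one fixed point: `f x - x` changes sign on `[a, f a]`, and two fixed points `x < y`
would give `y = f y ≤ f x = x`.
-/

open Set

theorem existsUnique_fixedPoint_of_antitoneOn {f : ℝ → ℝ} {a : ℝ}
    (hc : ContinuousOn f (Ici a)) (ha : AntitoneOn f (Ici a)) (hf : MapsTo f (Ici a) (Ici a)) :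
    ∃! x, a ≤ x ∧ f x = x := by
  have haa : a ∈ Ici a := mem_Ici.2 le_rfl
  have hfa : a ≤ f a := hf haa
  have hIcc : Icc a (f a) ⊆ Ici a := Icc_subset_Ici_self
  have hsign : (0 : ℝ) ∈ Icc (f (f a) - f a) (f a - a) :=
    ⟨sub_nonpos.2 (ha haa hfa hfa), sub_nonneg.2 hfa⟩
  obtain ⟨x, hx, hfx⟩ :=
    intermediate_value_Icc' hfa ((hc.mono hIcc).sub continuousOn_id) hsign
  refine ⟨x, ⟨hx.1, sub_eq_zero.1 hfx⟩, ?_⟩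
  have fixed_le : ∀ y z, a ≤ y → a ≤ z → f y = y → f z = z → y ≤ z → z ≤ y :=
    fun y z hy hz hfy hfz hyz => hfz ▸ hfy ▸ ha hy hz hyz
  rintro y ⟨hy, hfy⟩
  rcases le_total x y with hxy | hyx
  · exact le_antisymm (fixed_le x y hx.1 hy (sub_eq_zero.1 hfx) hfy hxy) hxy
  · exact le_antisymm hyx (fixed_le y x hy hx.1 hfy (sub_eq_zero.1 hfx) hyx)

theorem existsUnique_pos_cycle_three {f₁ f₂ f₃ : ℝ → ℝ}
    (hc₁ : ContinuousOn f₁ (Ici 0)) (hc₂ : ContinuousOn f₂ (Ici 0))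
    (hc₃ : ContinuousOn f₃ (Ici 0))
    (ha₁ : AntitoneOn f₁ (Ici 0)) (ha₂ : AntitoneOn f₂ (Ici 0)) (ha₃ : AntitoneOn f₃ (Ici 0))
    (hp₁ : MapsTo f₁ (Ici 0) (Ioi 0)) (hp₂ : MapsTo f₂ (Ici 0) (Ioi 0))
    (hp₃ : MapsTo f₃ (Ici 0) (Ioi 0)) :
    ∃! x : ℝ × ℝ × ℝ, (0 < x.1 ∧ 0 < x.2.1 ∧ 0 < x.2.2) ∧
      x.1 = f₁ x.2.2 ∧ x.2.1 = f₂ x.1 ∧ x.2.2 = f₃ x.2.1 := by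
  have hm₂ : MapsTo f₂ (Ici 0) (Ici 0) := hp₂.mono_right Ioi_subset_Ici_self
  have hm₃ : MapsTo f₃ (Ici 0) (Ici 0) := hp₃.mono_right Ioi_subset_Ici_self
  have hm₁₃₂ : MapsTo (f₁ ∘ f₃ ∘ f₂) (Ici 0) (Ici 0) :=
    (hp₁.mono_right Ioi_subset_Ici_self).comp (hm₃.comp hm₂)
  have hanti : AntitoneOn (f₁ ∘ f₃ ∘ f₂) (Ici 0) := fun x hx y hy hxy =>
    ha₁ (hm₃ (hm₂ hx)) (hm₃ (hm₂ hy)) (ha₃ (hm₂ hy) (hm₂ hx) (ha₂ hx hy hxy))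
  obtain ⟨c, ⟨hc0, hfc⟩, hcuniq⟩ := existsUnique_fixedPoint_of_antitoneOn
    (hc₁.comp (hc₃.comp hc₂ hm₂) (hm₃.comp hm₂)) hanti hm₁₃₂
  refine ⟨(c, f₂ c, f₃ (f₂ c)), ⟨⟨?_, hp₂ hc0, hp₃ (hm₂ hc0)⟩, hfc.symm, rfl, rfl⟩, ?_⟩
  · rw [← hfc]; exact hp₁ (hm₃ (hm₂ hc0))
  rintro ⟨x₁, x₂, x₃⟩ ⟨⟨hx₁, -, -⟩, h₁, h₂, h₃⟩
  obtain rfl : x₁ = c := hcuniq x₁ ⟨hx₁.le, by simp only [Function.comp, ← h₂, ← h₃, ← h₁]⟩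
  simp only at h₂ h₃
  subst h₃ h₂
  rfl

section Scaled

variable {ψ : ℝ → ℝ} {α β : ℝ}

theorem mul_eq_mul_iff_eq_div_mul (hα : 0 < α) (x y : ℝ) :
    α * x = β * y ↔ x = β / α * y := by
  rw [div_mul_eq_mul_div, eq_div_iff hα.ne', mul_comm]

theorem antitoneOn_div_mul (hα : 0 < α) (hβ : 0 < β) (ha : StrictAntiOn ψ (Ici 0)) :
    AntitoneOn (fun x => β / α * ψ x) (Ici 0) := fun _ hx _ hy hxy =>
  mul_le_mul_of_nonneg_left (ha.antitoneOn hx hy hxy) (div_pos hβ hα).le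

theorem mapsTo_div_mul (hα : 0 < α) (hβ : 0 < β) (hp : ∀ x : ℝ, 0 ≤ x → 0 < ψ x) :
    MapsTo (fun x => β / α * ψ x) (Ici 0) (Ioi 0) := fun x hx =>
  mul_pos (div_pos hβ hα) (hp x hx)

end Scaled

/-- the repressilator has a unique equilibrium in the positive orthant:
with `α_i, β_i > 0` and `ψ_i` continuous, strictly decreasing, and positive on `[0,∞)`,
there is a unique positive triple with `α_i x_i = β_i ψ_i(x_{i−1})` (indices mod 3). -/
theorem stmt19 (α₁ α₂ α₃ β₁ β₂ β₃ : ℝ)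
    (hα₁ : 0 < α₁) (hα₂ : 0 < α₂) (hα₃ : 0 < α₃)
    (hβ₁ : 0 < β₁) (hβ₂ : 0 < β₂) (hβ₃ : 0 < β₃)
    (ψ₁ ψ₂ ψ₃ : ℝ → ℝ)
    (hc₁ : ContinuousOn ψ₁ (Set.Ici 0)) (hc₂ : ContinuousOn ψ₂ (Set.Ici 0))
    (hc₃ : ContinuousOn ψ₃ (Set.Ici 0))
    (ha₁ : StrictAntiOn ψ₁ (Set.Ici 0)) (ha₂ : StrictAntiOn ψ₂ (Set.Ici 0))
    (ha₃ : StrictAntiOn ψ₃ (Set.Ici 0))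
    (hp₁ : ∀ x : ℝ, 0 ≤ x → 0 < ψ₁ x) (hp₂ : ∀ x : ℝ, 0 ≤ x → 0 < ψ₂ x)
    (hp₃ : ∀ x : ℝ, 0 ≤ x → 0 < ψ₃ x) :
    ∃! x : ℝ × ℝ × ℝ, (0 < x.1 ∧ 0 < x.2.1 ∧ 0 < x.2.2) ∧
      α₁ * x.1 = β₁ * ψ₁ x.2.2 ∧ α₂ * x.2.1 = β₂ * ψ₂ x.1 ∧
      α₃ * x.2.2 = β₃ * ψ₃ x.2.1 := by
  simp only [mul_eq_mul_iff_eq_div_mul hα₁, mul_eq_mul_iff_eq_div_mul hα₂,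
    mul_eq_mul_iff_eq_div_mul hα₃]
  exact existsUnique_pos_cycle_three
    (continuousOn_const.mul hc₁) (continuousOn_const.mul hc₂) (continuousOn_const.mul hc₃)
    (antitoneOn_div_mul hα₁ hβ₁ ha₁) (antitoneOn_div_mul hα₂ hβ₂ ha₂)
    (antitoneOn_div_mul hα₃ hβ₃ ha₃)
    (mapsTo_div_mul hα₁ hβ₁ hp₁) (mapsTo_div_mul hα₂ hβ₂ hp₂) (mapsTo_div_mul hα₃ hβ₃ hp₃)
end
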